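/- arXiv:1404.6287 — 9 statements merged into one kernel-verified Lean document; each statement's English description precedes it below -/
import Mathlib

section
/- Let n, k ≥ 1, ε ≥ 0, and let a, a', b : {1,…,n} → ℤ² be sequences of points such that the multiset T has at most k distinct points and Σ_{i=1}^{n} ‖a(i) − a'(i)‖₂ ≤ ε·Median_opt(a,k). Then (1 − √2·ε)·EMD(a,b) ≤ EMD(a',b) ≤ (1 + √2·ε)·EMD(a,b). -/
/-- ℓ1 norm on ℤ². -/
def l1 (p : ℤ × ℤ) : ℤ := |p.1| + |p.2|

/-- Earth-mover distance between the multisets {a 1,…,a n} and {b 1,…,b n}: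
the minimum over permutations σ of ∑ i, ‖a i − b (σ i)‖₁. -/
noncomputable def EMD {n : ℕ} (a b : Fin n → ℤ × ℤ) : ℤ :=
  Finset.univ.inf' Finset.univ_nonempty
    (fun σ : Equiv.Perm (Fin n) => ∑ i, l1 (a i - b (σ i)))

/-- Euclidean norm on ℝ². -/
noncomputable def l2 (p : ℝ × ℝ) : ℝ := Real.sqrt (p.1 ^ 2 + p.2 ^ 2)

/-- Coercion of an integer point to ℝ². -/
def toR (p : ℤ × ℤ) : ℝ × ℝ := ((p.1 : ℝ), (p.2 : ℝ))

/-- Median(a,C) = Σᵢ min_{c∈C} ‖a i − c‖₂ for a finite nonempty C ⊆ ℝ². -/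
noncomputable def Median {n : ℕ} (a : Fin n → ℤ × ℤ) (C : Finset (ℝ × ℝ)) (hC : C.Nonempty) : ℝ :=
  ∑ i, C.inf' hC (fun c => l2 (toR (a i) - c))

/-- Median_opt(a,k): infimum of Median(a,C) over finite nonempty C ⊆ ℝ² with |C| ≤ k. -/
noncomputable def MedianOpt {n : ℕ} (a : Fin n → ℤ × ℤ) (k : ℕ) : ℝ :=
  sInf {m | ∃ (C : Finset (ℝ × ℝ)) (hC : C.Nonempty), C.card ≤ k ∧ m = Median a C hC}

lemma l2_nonneg (p : ℝ × ℝ) : 0 ≤ l2 p := Real.sqrt_nonneg _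

lemma l2_le_l1 (p : ℤ × ℤ) : l2 (toR p) ≤ (l1 p : ℝ) := by
  have h : ((p.1:ℝ))^2 + ((p.2:ℝ))^2 ≤ ((l1 p : ℤ) : ℝ)^2 := by
    simp only [l1]
    push_cast
    nlinarith [sq_abs (p.1:ℝ), sq_abs (p.2:ℝ),
      mul_nonneg (abs_nonneg (p.1:ℝ)) (abs_nonneg (p.2:ℝ))]
  have h0 : (0:ℝ) ≤ ((l1 p : ℤ) : ℝ) := by
    simp only [l1]; push_cast; positivity
  calc l2 (toR p) = Real.sqrt ((p.1:ℝ)^2 + (p.2:ℝ)^2) := rfl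
    _ ≤ Real.sqrt (((l1 p : ℤ) : ℝ)^2) := Real.sqrt_le_sqrt h
    _ = _ := by rw [Real.sqrt_sq h0]

lemma l1_le_sqrt2_l2 (p : ℤ × ℤ) : ((l1 p : ℤ) : ℝ) ≤ Real.sqrt 2 * l2 (toR p) := by
  have h0 : (0:ℝ) ≤ ((l1 p : ℤ) : ℝ) := by
    simp only [l1]; push_cast; positivity
  have h : (((l1 p : ℤ) : ℝ))^2 ≤ 2 * ((p.1:ℝ)^2 + (p.2:ℝ)^2) := by
    simp only [l1]; push_cast
    nlinarith [sq_nonneg (|(p.1:ℝ)| - |(p.2:ℝ)|), sq_abs (p.1:ℝ), sq_abs (p.2:ℝ)]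
  calc ((l1 p : ℤ) : ℝ) = Real.sqrt ((((l1 p : ℤ) : ℝ))^2) := (Real.sqrt_sq h0).symm
    _ ≤ Real.sqrt (2 * ((p.1:ℝ)^2 + (p.2:ℝ)^2)) := Real.sqrt_le_sqrt h
    _ = Real.sqrt 2 * l2 (toR p) := by
        rw [Real.sqrt_mul (by norm_num)]; rfl

lemma l1_triangle (p q : ℤ × ℤ) : l1 (p + q) ≤ l1 p + l1 q := by
  simp only [l1, Prod.fst_add, Prod.snd_add]
  have := abs_add_le p.1 q.1
  have := abs_add_le p.2 q.2
  omega

lemma EMD_le {n : ℕ} (a b : Fin n → ℤ × ℤ) (σ : Equiv.Perm (Fin n)) :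
    EMD a b ≤ ∑ i, l1 (a i - b (σ i)) :=
  Finset.inf'_le _ (Finset.mem_univ σ)

lemma EMD_exists {n : ℕ} (a b : Fin n → ℤ × ℤ) :
    ∃ σ : Equiv.Perm (Fin n), EMD a b = ∑ i, l1 (a i - b (σ i)) := by
  obtain ⟨σ, -, h⟩ := Finset.exists_mem_eq_inf' (Finset.univ_nonempty)
    (fun σ : Equiv.Perm (Fin n) => ∑ i, l1 (a i - b (σ i)))
  exact ⟨σ, h⟩

lemma EMD_triangle {n : ℕ} (a a' b : Fin n → ℤ × ℤ) :
    EMD a' b ≤ EMD a b + ∑ i, l1 (a' i - a i) := by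
  obtain ⟨σ, hσ⟩ := EMD_exists a b
  calc EMD a' b ≤ ∑ i, l1 (a' i - b (σ i)) := EMD_le a' b σ
    _ ≤ ∑ i, (l1 (a' i - a i) + l1 (a i - b (σ i))) := by
        apply Finset.sum_le_sum
        intro i _
        have : a' i - b (σ i) = (a' i - a i) + (a i - b (σ i)) := by ring
        rw [this]; exact l1_triangle _ _
    _ = EMD a b + ∑ i, l1 (a' i - a i) := by rw [Finset.sum_add_distrib, hσ]; ring

lemma EMD_nonneg {n : ℕ} (a b : Fin n → ℤ × ℤ) : 0 ≤ EMD a b := by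
  obtain ⟨σ, hσ⟩ := EMD_exists a b
  rw [hσ]
  apply Finset.sum_nonneg
  intro i _
  simp only [l1]
  positivity

lemma medianOpt_le_EMD {n k : ℕ} [Nonempty (Fin n)] (a b : Fin n → ℤ × ℤ)
    (hT : (Finset.univ.image b).card ≤ k) :
    MedianOpt a k ≤ (EMD a b : ℝ) := by
  set C : Finset (ℝ × ℝ) := (Finset.univ.image b).image toR with hCdef
  have hC : C.Nonempty := by
    apply Finset.Nonempty.image
    apply Finset.Nonempty.image
    exact Finset.univ_nonempty
  have hcard : C.card ≤ k := le_trans (Finset.card_image_le) hT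
  have hmem : Median a C hC ∈ {m | ∃ (C : Finset (ℝ × ℝ)) (hC : C.Nonempty),
      C.card ≤ k ∧ m = Median a C hC} := ⟨C, hC, hcard, rfl⟩
  have hbdd : BddBelow {m | ∃ (C : Finset (ℝ × ℝ)) (hC : C.Nonempty),
      C.card ≤ k ∧ m = Median a C hC} := by
    refine ⟨0, fun m hm => ?_⟩
    obtain ⟨D, hD, -, rfl⟩ := hm
    apply Finset.sum_nonneg
    intro i _
    exact Finset.le_inf' hD _ (fun c _ => l2_nonneg _)
  have h1 : MedianOpt a k ≤ Median a C hC := csInf_le hbdd hmem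
  obtain ⟨σ, hσ⟩ := EMD_exists a b
  have h2 : Median a C hC ≤ (EMD a b : ℝ) := by
    rw [hσ]
    push_cast
    apply Finset.sum_le_sum
    intro i _
    have hmemc : toR (b (σ i)) ∈ C := by
      apply Finset.mem_image_of_mem
      exact Finset.mem_image_of_mem b (Finset.mem_univ _)
    calc C.inf' hC (fun c => l2 (toR (a i) - c)) ≤ l2 (toR (a i) - toR (b (σ i))) :=
          Finset.inf'_le _ hmemc
      _ ≤ ((l1 (a i - b (σ i)) : ℤ) : ℝ) := by
          have : toR (a i) - toR (b (σ i)) = toR (a i - b (σ i)) := by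
            simp [toR]
          rw [this]; exact l2_le_l1 _
  linarith

/-- if T has at most k distinct points and
Σᵢ ‖a i − a' i‖₂ ≤ ε·Median_opt(a,k), then
(1 − √2·ε)·EMD(a,b) ≤ EMD(a',b) ≤ (1 + √2·ε)·EMD(a,b). -/
theorem emd_coreset_approx (n k : ℕ) (hn : 1 ≤ n) (hk : 1 ≤ k) (ε : ℝ) (hε : 0 ≤ ε)
    (a a' b : Fin n → ℤ × ℤ) (hT : (Finset.univ.image b).card ≤ k)
    (hclose : ∑ i, l2 (toR (a i) - toR (a' i)) ≤ ε * MedianOpt a k) :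
    (1 - Real.sqrt 2 * ε) * (EMD a b : ℝ) ≤ (EMD a' b : ℝ) ∧
      (EMD a' b : ℝ) ≤ (1 + Real.sqrt 2 * ε) * (EMD a b : ℝ) := by
  haveI : Nonempty (Fin n) := ⟨⟨0, by omega⟩⟩
  set D : ℤ := ∑ i, l1 (a i - a' i) with hD
  have hD2 : (∑ i, l1 (a' i - a i)) = D := by
    apply Finset.sum_congr rfl
    intro i _
    simp only [l1]
    have h1 : (a' i - a i).1 = -((a i - a' i).1) := by simp
    have h2 : (a' i - a i).2 = -((a i - a' i).2) := by simp
    rw [h1, h2, abs_neg, abs_neg]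
  -- D ≤ √2 * ∑ l2
  have hDle : (D : ℝ) ≤ Real.sqrt 2 * ∑ i, l2 (toR (a i) - toR (a' i)) := by
    rw [Finset.mul_sum, hD]
    push_cast
    apply Finset.sum_le_sum
    intro i _
    have : toR (a i) - toR (a' i) = toR (a i - a' i) := by simp [toR]
    rw [this]
    exact_mod_cast l1_le_sqrt2_l2 (a i - a' i)
  have hmed : MedianOpt a k ≤ (EMD a b : ℝ) := medianOpt_le_EMD a b hT
  have hεmed : ε * MedianOpt a k ≤ ε * (EMD a b : ℝ) :=
    mul_le_mul_of_nonneg_left hmed hε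
  have hsqrt2 : (0:ℝ) ≤ Real.sqrt 2 := Real.sqrt_nonneg 2
  have hDfinal : (D : ℝ) ≤ Real.sqrt 2 * ε * (EMD a b : ℝ) := by
    calc (D : ℝ) ≤ Real.sqrt 2 * ∑ i, l2 (toR (a i) - toR (a' i)) := hDle
      _ ≤ Real.sqrt 2 * (ε * MedianOpt a k) := mul_le_mul_of_nonneg_left hclose hsqrt2
      _ ≤ Real.sqrt 2 * (ε * (EMD a b : ℝ)) := mul_le_mul_of_nonneg_left hεmed hsqrt2
      _ = Real.sqrt 2 * ε * (EMD a b : ℝ) := by ring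
  have ht1 : EMD a' b ≤ EMD a b + D := by
    have := EMD_triangle a a' b
    rw [hD2] at this
    exact this
  have ht2 : EMD a b ≤ EMD a' b + D := EMD_triangle a' a b
  have ht1' : (EMD a' b : ℝ) ≤ (EMD a b : ℝ) + (D : ℝ) := by exact_mod_cast ht1
  have ht2' : (EMD a b : ℝ) ≤ (EMD a' b : ℝ) + (D : ℝ) := by exact_mod_cast ht2
  constructor
  · nlinarith
  · nlinarith
end

section
/- Let n ≥ 1, let a, b : {1,…,n} → ℤ², let σ be an optimal matching, and let (L,v) be a grid with cell size L ≥ 1 and shift v ∈ {0,…,L−1}². Suppose r₁,…,r_κ (κ ≥ 1) are pairwise distinct indices in {1,…,n} such that for every j ∈ {1,…,κ}, the points b(σ(r_j)) and a(r_{j+1}) lie in the same cell of the grid (L,v) (indices taken cyclically, so r_{κ+1} = r₁). Then for every j ∈ {1,…,κ}, ‖a(r_j) − b(σ(r_j))‖₁ < 2κL. -/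
/-- The grid cell of a point p for the grid of cell size L shifted by v
(floor division; `/` on ℤ with positive divisor is floor division). -/
def cell (L : ℕ) (v p : ℤ × ℤ) : ℤ × ℤ :=
  ((p.1 - v.1) / (L : ℤ), (p.2 - v.2) / (L : ℤ))

lemma l1_nonneg (p : ℤ × ℤ) : 0 ≤ l1 p := by
  unfold l1; positivity

lemma div_eq_imp (L x y : ℤ) (hL : 0 < L) (h : x / L = y / L) : |x - y| < L := by
  have hx := Int.emod_add_mul_ediv x L
  have hy := Int.emod_add_mul_ediv y L
  have h1 : 0 ≤ x % L := Int.emod_nonneg x (by omega)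
  have h2 : x % L < L := Int.emod_lt_of_pos x hL
  have h3 : 0 ≤ y % L := Int.emod_nonneg y (by omega)
  have h4 : y % L < L := Int.emod_lt_of_pos y hL
  have hLL : L * (x / L) = L * (y / L) := by rw [h]
  have : x - y = x % L - y % L := by linarith
  rw [this, abs_lt]; omega

lemma l1_lt_of_same_cell (L : ℕ) (hL : 1 ≤ L) (v p q : ℤ × ℤ)
    (h : cell L v p = cell L v q) : l1 (p - q) < 2 * L := by
  have hL' : (0 : ℤ) < L := by exact_mod_cast hL
  have h1 := congrArg Prod.fst h
  have h2 := congrArg Prod.snd h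
  simp only [cell] at h1 h2
  have e1 := div_eq_imp L (p.1 - v.1) (q.1 - v.1) hL' h1
  have e2 := div_eq_imp L (p.2 - v.2) (q.2 - v.2) hL' h2
  have : p.1 - v.1 - (q.1 - v.1) = p.1 - q.1 := by ring
  rw [this] at e1
  have : p.2 - v.2 - (q.2 - v.2) = p.2 - q.2 := by ring
  rw [this] at e2
  unfold l1
  simp only [Prod.fst_sub, Prod.snd_sub]
  omega

/-- if σ is an optimal matching and r₁,…,r_κ are pairwise distinct
indices (indexed cyclically by ZMod κ) such that b (σ (r j)) and a (r (j+1)) always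
lie in the same grid cell, then every matched edge a (r j) — b (σ (r j)) has
ℓ1 length < 2κL. -/
theorem cycle_edge_short (n : ℕ) (hn : 1 ≤ n) (a b : Fin n → ℤ × ℤ)
    (σ : Equiv.Perm (Fin n))
    (hopt : ∀ τ : Equiv.Perm (Fin n),
      ∑ i, l1 (a i - b (σ i)) ≤ ∑ i, l1 (a i - b (τ i)))
    (L : ℕ) (hL : 1 ≤ L) (v : ℤ × ℤ)
    (hv : 0 ≤ v.1 ∧ v.1 < (L : ℤ) ∧ 0 ≤ v.2 ∧ v.2 < (L : ℤ))
    (κ : ℕ) (hκ : 1 ≤ κ) (r : ZMod κ → Fin n) (hr : Function.Injective r)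
    (hcell : ∀ j : ZMod κ, cell L v (b (σ (r j))) = cell L v (a (r (j + 1)))) :
    ∀ j : ZMod κ, l1 (a (r j) - b (σ (r j))) < 2 * (κ : ℤ) * (L : ℤ) := by
  haveI : NeZero κ := ⟨by omega⟩
  set f : ZMod κ ↪ Fin n := ⟨r, hr⟩ with hf
  set s : Equiv.Perm (Fin n) := (Equiv.addRight (1 : ZMod κ)).viaEmbedding f with hs
  set τ : Equiv.Perm (Fin n) := σ * s⁻¹ with hτ
  have hsr : ∀ j : ZMod κ, s (r j) = r (j + 1) := fun j =>
    (Equiv.addRight (1 : ZMod κ)).viaEmbedding_apply f j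
  have hsinv : ∀ j : ZMod κ, s⁻¹ (r j) = r (j - 1) := by
    intro j
    have : s (r (j - 1)) = r j := by rw [hsr]; ring_nf
    exact (Equiv.symm_apply_eq s).mpr this.symm
  have hsoff : ∀ x : Fin n, x ∉ Set.range r → s⁻¹ x = x := by
    intro x hx
    have hsx : s x = x := (Equiv.addRight (1 : ZMod κ)).viaEmbedding_apply_of_notMem f x hx
    exact (Equiv.symm_apply_eq s).mpr hsx.symm
  -- sum over the image of r
  set S : Finset (Fin n) := Finset.univ.image r with hS
  have hsumσ : ∑ i, l1 (a i - b (σ i)) =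
      ∑ i ∈ S, l1 (a i - b (σ i)) + ∑ i ∈ Sᶜ, l1 (a i - b (σ i)) :=
    (Finset.sum_add_sum_compl S _).symm
  have hsumτ : ∑ i, l1 (a i - b (τ i)) =
      ∑ i ∈ S, l1 (a i - b (τ i)) + ∑ i ∈ Sᶜ, l1 (a i - b (τ i)) :=
    (Finset.sum_add_sum_compl S _).symm
  have hcompl : ∀ i ∈ Sᶜ, l1 (a i - b (τ i)) = l1 (a i - b (σ i)) := by
    intro i hi
    have : i ∉ Set.range r := by
      simp only [hS, Finset.mem_compl, Finset.mem_image, Finset.mem_univ, true_and] at hi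
      rintro ⟨j, hj⟩; exact hi ⟨j, hj⟩
    simp [hτ, Equiv.Perm.mul_apply, hsoff i this]
  have hkey : ∑ i ∈ S, l1 (a i - b (σ i)) ≤ ∑ i ∈ S, l1 (a i - b (τ i)) := by
    have h := hopt τ
    rw [hsumσ, hsumτ, Finset.sum_congr rfl hcompl] at h
    omega
  have himg : ∀ g : Fin n → ℤ, ∑ i ∈ S, g i = ∑ j : ZMod κ, g (r j) := by
    intro g
    rw [hS, Finset.sum_image (fun x _ y _ h => hr h)]
  have hτr : ∀ j : ZMod κ, τ (r j) = σ (r (j - 1)) := by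
    intro j
    simp [hτ, Equiv.Perm.mul_apply, hsinv j]
  have hsum2 : ∑ j : ZMod κ, l1 (a (r j) - b (τ (r j)))
      = ∑ j : ZMod κ, l1 (a (r (j + 1)) - b (σ (r j))) := by
    rw [← Equiv.sum_comp (Equiv.addRight (1 : ZMod κ))
      (fun j => l1 (a (r j) - b (τ (r j))))]
    apply Finset.sum_congr rfl
    intro j _
    simp only [Equiv.coe_addRight]
    rw [hτr (j + 1)]
    ring_nf
  have hbound : ∑ j : ZMod κ, l1 (a (r (j + 1)) - b (σ (r j))) < 2 * (κ : ℤ) * (L : ℤ) := by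
    have : ∀ j : ZMod κ, l1 (a (r (j + 1)) - b (σ (r j))) < 2 * L := by
      intro j
      have h := l1_lt_of_same_cell L hL v (b (σ (r j))) (a (r (j + 1))) (hcell j)
      have habs : l1 (a (r (j + 1)) - b (σ (r j))) = l1 (b (σ (r j)) - a (r (j + 1))) := by
        unfold l1
        simp only [Prod.fst_sub, Prod.snd_sub]
        rw [abs_sub_comm, abs_sub_comm (b (σ (r j))).2]
      rw [habs]; exact h
    calc ∑ j : ZMod κ, l1 (a (r (j + 1)) - b (σ (r j)))
        < ∑ _j : ZMod κ, (2 * (L : ℤ)) := by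
          apply Finset.sum_lt_sum_of_nonempty
          · exact Finset.univ_nonempty
          · intro j _; exact this j
      _ = 2 * (κ : ℤ) * (L : ℤ) := by
          rw [Finset.sum_const, Finset.card_univ, ZMod.card]
          push_cast; ring
  have htotal : ∑ j : ZMod κ, l1 (a (r j) - b (σ (r j))) < 2 * (κ : ℤ) * (L : ℤ) := by
    calc ∑ j : ZMod κ, l1 (a (r j) - b (σ (r j)))
        = ∑ i ∈ S, l1 (a i - b (σ i)) := (himg (fun i => l1 (a i - b (σ i)))).symm
      _ ≤ ∑ i ∈ S, l1 (a i - b (τ i)) := hkey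
      _ = ∑ j : ZMod κ, l1 (a (r j) - b (τ (r j))) := himg _
      _ = ∑ j : ZMod κ, l1 (a (r (j + 1)) - b (σ (r j))) := hsum2
      _ < 2 * (κ : ℤ) * (L : ℤ) := hbound
  intro j
  have hle : l1 (a (r j) - b (σ (r j))) ≤ ∑ j' : ZMod κ, l1 (a (r j') - b (σ (r j'))) :=
    Finset.single_le_sum (fun j' _ => l1_nonneg _) (Finset.mem_univ j)
  omega
end

section
/- Let G be a finite directed multigraph and let e be an edge of G that lies on no directed cycle. Then there exists a directed trail in G containing e whose first vertex u satisfies deg⁺(u) > deg⁻(u), whose last vertex z satisfies deg⁻(z) > deg⁺(z), and u ≠ z. -/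
/-- A directed walk in a multigraph (edge type `E`, maps `tail`, `head`):
vertices `u : Fin (m+1) → V`, edges `f : Fin m → E` with matching endpoints. -/
def IsWalk {V E : Type} (tail head : E → V) {m : ℕ}
    (u : Fin (m + 1) → V) (f : Fin m → E) : Prop :=
  ∀ r : Fin m, tail (f r) = u r.castSucc ∧ head (f r) = u r.succ

/-- A directed cycle: a closed walk with at least one edge, pairwise distinct
edges, and pairwise distinct vertices except for the coinciding endpoints. -/
def IsCycle {V E : Type} (tail head : E → V) {m : ℕ}
    (u : Fin (m + 1) → V) (f : Fin m → E) : Prop :=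
  IsWalk tail head u f ∧ 1 ≤ m ∧ Function.Injective f ∧
    u 0 = u (Fin.last m) ∧
    ∀ i j : Fin m, u i.castSucc = u j.castSucc → i = j

/-!
Take a longest trail through `e`. It cannot be extended, so all out-edges of its last vertex and
all in-edges of its first vertex lie on it. It is not closed: a closed trail through `e` contains a
walk from the head of `e` to its tail, which shortens to a path and closes up with `e` to a
cycle. Counting the visits of the trail to its last vertex `z`, each visit but the last enters
and leaves `z`, so `z` has more in-edges than out-edges; the first vertex is the last one of the
reversed trail in the reversed graph.
-/

open Finset Function Relation

section Walks

variable {V E : Type} {tail head : E → V}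

def IsTrail (tail head : E → V) {m : ℕ} (u : Fin (m + 1) → V) (f : Fin m → E) : Prop :=
  IsWalk tail head u f ∧ Injective f

def Adj (tail head : E → V) (a b : V) : Prop :=
  ∃ g, tail g = a ∧ head g = b

theorem IsWalk.snoc {m : ℕ} {u : Fin (m + 1) → V} {f : Fin m → E} (hw : IsWalk tail head u f)
    {g : E} (hg : tail g = u (Fin.last m)) :
    IsWalk tail head (Fin.snoc u (head g) : Fin (m + 2) → V) (Fin.snoc f g : Fin (m + 1) → E) := by
  intro r
  induction r using Fin.lastCases with
  | last => simp [hg]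
  | cast i =>
    rw [Fin.succ_castSucc, Fin.snoc_castSucc, Fin.snoc_castSucc, Fin.snoc_castSucc]
    exact hw i

theorem IsWalk.rev {m : ℕ} {u : Fin (m + 1) → V} {f : Fin m → E} (hw : IsWalk tail head u f) :
    IsWalk head tail (u ∘ Fin.rev) (f ∘ Fin.rev) := fun r => by
  simpa [Fin.rev_castSucc, Fin.rev_succ, and_comm] using hw r.rev

theorem IsWalk.castLE {m : ℕ} {u : Fin (m + 1) → V} {f : Fin m → E} (hw : IsWalk tail head u f)
    {k : ℕ} (hk : k ≤ m) :
    IsWalk tail head (u ∘ Fin.castLE (Nat.succ_le_succ hk)) (f ∘ Fin.castLE hk) := fun r => by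
  simpa [Fin.castLE_castSucc, Fin.castLE_succ] using hw (Fin.castLE hk r)

theorem IsWalk.injective_of_injective_castSucc {m : ℕ} {u : Fin (m + 1) → V} {f : Fin m → E}
    (hw : IsWalk tail head u f) (hu : Injective (u ∘ Fin.castSucc)) : Injective f :=
  fun i j h => hu (by simpa only [comp_apply, (hw i).1, (hw j).1] using congrArg tail h)

theorem IsWalk.reflTransGen {m : ℕ} {u : Fin (m + 1) → V} {f : Fin m → E}
    (hw : IsWalk tail head u f) {i j : Fin (m + 1)} (hij : i ≤ j) :
    ReflTransGen (Adj tail head) (u i) (u j) := by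
  induction j using Fin.induction with
  | zero => rw [Fin.le_zero_iff.mp hij]
  | succ j ih =>
    rcases hij.lt_or_eq with hlt | rfl
    · exact (ih (Fin.le_castSucc_iff.mpr hlt)).tail ⟨f j, hw j⟩
    · rfl

theorem exists_injective_walk_of_reflTransGen {x y : V} (h : ReflTransGen (Adj tail head) x y) :
    ∃ (k : ℕ) (p : Fin (k + 1) → V) (g : Fin k → E),
      IsWalk tail head p g ∧ Injective p ∧ p 0 = x ∧ p (Fin.last k) = y := by
  induction h with
  | refl => exact ⟨0, fun _ => x, Fin.elim0, (·.elim0), fun a b _ => Fin.ext (by omega), rfl, rfl⟩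
  | @tail b c _ hbc ih =>
    obtain ⟨k, p, g, hw, hp, hp0, hpl⟩ := ih
    obtain ⟨e, rfl, rfl⟩ := hbc
    by_cases hc : head e ∈ Set.range p
    · obtain ⟨i, hi⟩ := hc
      refine ⟨i, _, _, hw.castLE (Nat.lt_succ_iff.mp i.isLt), hp.comp (Fin.castLE_injective _),
        hp0, ?_⟩
      exact hi
    · exact ⟨k + 1, _, _, hw.snoc hpl.symm, Fin.snoc_injective_of_injective hp hc,
        by simpa using hp0, by simp⟩

theorem IsWalk.isCycle_snoc {k : ℕ} {p : Fin (k + 1) → V} {g : Fin k → E}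
    (hw : IsWalk tail head p g) (hp : Injective p) {e : E}
    (hp0 : p 0 = head e) (hpl : p (Fin.last k) = tail e) :
    IsCycle tail head (Fin.snoc p (head e) : Fin (k + 2) → V) (Fin.snoc g e : Fin (k + 1) → E) := by
  have hw' := hw.snoc hpl.symm
  have hcast : Injective ((Fin.snoc p (head e) : Fin (k + 2) → V) ∘ Fin.castSucc) := by
    simpa only [comp_def, Fin.snoc_castSucc] using hp
  refine ⟨hw', Nat.le_add_left 1 k, hw'.injective_of_injective_castSucc hcast, ?_,
    fun i j h => hcast h⟩
  rw [← Fin.castSucc_zero, Fin.snoc_castSucc, Fin.snoc_last, hp0]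

theorem exists_cycle_of_closed_walk {m : ℕ} {u : Fin (m + 1) → V} {f : Fin m → E}
    (hw : IsWalk tail head u f) (hclosed : u 0 = u (Fin.last m)) {e : E} (he : e ∈ Set.range f) :
    ∃ (n : ℕ) (w : Fin (n + 1) → V) (g : Fin n → E), IsCycle tail head w g ∧ ∃ r, g r = e := by
  obtain ⟨r, hr⟩ := he
  have hreach : ReflTransGen (Adj tail head) (head e) (tail e) := by
    rw [← hr, (hw r).1, (hw r).2]
    have h₁ := hw.reflTransGen (Fin.le_last r.succ)
    have h₂ := hw.reflTransGen (Fin.zero_le r.castSucc)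
    rw [← hclosed] at h₁
    exact h₁.trans h₂
  obtain ⟨k, p, g, hpw, hp, hp0, hpl⟩ := exists_injective_walk_of_reflTransGen hreach
  exact ⟨k + 1, _, _, hpw.isCycle_snoc hp hp0 hpl, Fin.last k, by simp⟩

theorem IsTrail.rev {m : ℕ} {u : Fin (m + 1) → V} {f : Fin m → E} (ht : IsTrail tail head u f) :
    IsTrail head tail (u ∘ Fin.rev) (f ∘ Fin.rev) :=
  ⟨ht.1.rev, ht.2.comp Fin.rev_injective⟩

theorem IsTrail.snoc {m : ℕ} {u : Fin (m + 1) → V} {f : Fin m → E} (ht : IsTrail tail head u f)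
    {g : E} (hg : tail g = u (Fin.last m)) (hgf : g ∉ Set.range f) :
    IsTrail tail head (Fin.snoc u (head g) : Fin (m + 2) → V) (Fin.snoc f g : Fin (m + 1) → E) :=
  ⟨ht.1.snoc hg, Fin.snoc_injective_of_injective ht.2 hgf⟩

theorem card_filter_castSucc_add_eq_card_filter_succ_add [DecidableEq V] {m : ℕ}
    (u : Fin (m + 1) → V) (z : V) :
    #{i : Fin m | u i.castSucc = z} + (if u (Fin.last m) = z then 1 else 0) =
      #{i : Fin m | u i.succ = z} + (if u 0 = z then 1 else 0) := by
  simp only [card_filter]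
  rw [← Fin.sum_univ_castSucc (fun i => if u i = z then 1 else 0), Fin.sum_univ_succ, add_comm]

theorem IsTrail.card_tail_lt_card_head [Fintype E] [DecidableEq V] {m : ℕ}
    {u : Fin (m + 1) → V} {f : Fin m → E} (ht : IsTrail tail head u f)
    (hout : ∀ g, tail g = u (Fin.last m) → g ∈ Set.range f) (hne : u 0 ≠ u (Fin.last m)) :
    #{g | tail g = u (Fin.last m)} < #{g | head g = u (Fin.last m)} := by
  set z := u (Fin.last m)
  have hcount := card_filter_castSucc_add_eq_card_filter_succ_add u z
  rw [if_pos rfl, if_neg hne] at hcount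
  calc #{g | tail g = z} ≤ #{i : Fin m | u i.castSucc = z} := by
        refine card_le_card_of_surjOn f fun g hg => ?_
        obtain ⟨i, rfl⟩ := hout g (mem_filter.mp hg).2
        exact ⟨i, by simpa [← (ht.1 i).1] using (mem_filter.mp hg).2, rfl⟩
    _ < #{i : Fin m | u i.succ = z} := by omega
    _ ≤ #{g | head g = z} :=
        card_le_card_of_injOn f (fun i hi => by simpa [(ht.1 i).2] using hi) ht.2.injOn

def IsLongestTrailThrough (tail head : E → V) (e : E) {m : ℕ} (u : Fin (m + 1) → V)
    (f : Fin m → E) : Prop :=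
  IsTrail tail head u f ∧ e ∈ Set.range f ∧
    ∀ (k : ℕ) (u' : Fin (k + 1) → V) (f' : Fin k → E),
      IsTrail tail head u' f' → e ∈ Set.range f' → k ≤ m

theorem exists_isLongestTrailThrough [Finite E] (tail head : E → V) (e : E) :
    ∃ (m : ℕ) (u : Fin (m + 1) → V) (f : Fin m → E), IsLongestTrailThrough tail head e u f := by
  classical
  let P : ℕ → Prop := fun k =>
    ∃ (u : Fin (k + 1) → V) (f : Fin k → E), IsTrail tail head u f ∧ e ∈ Set.range f
  have hP : P 1 := ⟨![tail e, head e], ![e], ⟨fun r => by fin_cases r; exact ⟨rfl, rfl⟩,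
    fun a b _ => Subsingleton.elim a b⟩, 0, rfl⟩
  have hbound : ∀ k, P k → k ≤ Nat.card E := by
    rintro k ⟨u, f, ht, -⟩
    simpa using Nat.card_le_card_of_injective f ht.2
  obtain ⟨u, f, ht, he⟩ := Nat.findGreatest_spec (hbound 1 hP) hP
  exact ⟨_, u, f, ht, he, fun k u' f' ht' he' => Nat.le_findGreatest (hbound k ⟨u', f', ht', he'⟩)
    ⟨u', f', ht', he'⟩⟩

namespace IsLongestTrailThrough

variable {e : E} {m : ℕ} {u : Fin (m + 1) → V} {f : Fin m → E}

theorem rev (h : IsLongestTrailThrough tail head e u f) :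
    IsLongestTrailThrough head tail e (u ∘ Fin.rev) (f ∘ Fin.rev) := by
  have hrange {k : ℕ} (f' : Fin k → E) : Set.range (f' ∘ Fin.rev) = Set.range f' :=
    Fin.rev_surjective.range_comp f'
  refine ⟨h.1.rev, (hrange f).symm ▸ h.2.1, fun k u' f' ht' he' => ?_⟩
  exact h.2.2 k _ _ ht'.rev ((hrange f').symm ▸ he')

theorem mem_range_of_tail_eq_last (h : IsLongestTrailThrough tail head e u f) {g : E}
    (hg : tail g = u (Fin.last m)) : g ∈ Set.range f := by
  by_contra hgf
  obtain ⟨r, hr⟩ := h.2.1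
  have := h.2.2 (m + 1) _ _ (h.1.snoc hg hgf) ⟨r.castSucc, by rw [Fin.snoc_castSucc, hr]⟩
  omega

end IsLongestTrailThrough

end Walks

theorem trail_through_acyclic_edge_general (V E : Type) [DecidableEq V]
    [Fintype E] (tail head : E → V) (e : E)
    (hnocycle : ¬ ∃ (m : ℕ) (u : Fin (m + 1) → V) (f : Fin m → E),
      IsCycle tail head u f ∧ ∃ r, f r = e) :
    ∃ (m : ℕ) (u : Fin (m + 1) → V) (f : Fin m → E),
      IsWalk tail head u f ∧ Function.Injective f ∧ (∃ r, f r = e) ∧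
      (Finset.univ.filter fun e' => head e' = u 0).card <
        (Finset.univ.filter fun e' => tail e' = u 0).card ∧
      (Finset.univ.filter fun e' => tail e' = u (Fin.last m)).card <
        (Finset.univ.filter fun e' => head e' = u (Fin.last m)).card ∧
      u 0 ≠ u (Fin.last m) := by
  obtain ⟨m, u, f, hlong⟩ := exists_isLongestTrailThrough tail head e
  have hne : u 0 ≠ u (Fin.last m) := fun hclosed =>
    hnocycle (exists_cycle_of_closed_walk hlong.1.1 hclosed hlong.2.1)
  have hend := hlong.1.card_tail_lt_card_head (fun _ => hlong.mem_range_of_tail_eq_last) hne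
  have hstart := hlong.rev.1.card_tail_lt_card_head (fun _ => hlong.rev.mem_range_of_tail_eq_last)
    (by simpa using hne.symm)
  rw [comp_apply, Fin.rev_last] at hstart
  exact ⟨m, u, f, hlong.1.1, hlong.1.2, hlong.2.1, hstart, hend, hne⟩

/-- if an edge `e` of a finite directed multigraph lies on no
directed cycle, then there is a directed trail through `e` starting at a vertex
`u₀` with deg⁺(u₀) > deg⁻(u₀), ending at a different vertex `z` with
deg⁻(z) > deg⁺(z). -/
theorem trail_through_acyclic_edge (V E : Type) [Fintype V] [DecidableEq V]
    [Fintype E] (tail head : E → V) (e : E)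
    (hnocycle : ¬ ∃ (m : ℕ) (u : Fin (m + 1) → V) (f : Fin m → E),
      IsCycle tail head u f ∧ ∃ r, f r = e) :
    ∃ (m : ℕ) (u : Fin (m + 1) → V) (f : Fin m → E),
      IsWalk tail head u f ∧ Function.Injective f ∧ (∃ r, f r = e) ∧
      (Finset.univ.filter fun e' => head e' = u 0).card <
        (Finset.univ.filter fun e' => tail e' = u 0).card ∧
      (Finset.univ.filter fun e' => tail e' = u (Fin.last m)).card <
        (Finset.univ.filter fun e' => head e' = u (Fin.last m)).card ∧
      u 0 ≠ u (Fin.last m) :=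
  trail_through_acyclic_edge_general V E tail head e hnocycle
end

section
/- Let G be a finite directed multigraph and let W be a directed trail in G from a vertex u to a vertex z with u ≠ z, where deg⁺_G(u) > deg⁻_G(u) and deg⁻_G(z) > deg⁺_G(z). Let G′ be the multigraph obtained from G by deleting the edges of W. Then Σ_{v} |deg⁺_{G′}(v) − deg⁻_{G′}(v)| = Σ_{v} |deg⁺_G(v) − deg⁻_G(v)| − 2. -/
/-- deleting the edges of a directed trail from `u` to `z` (u ≠ z),
where deg⁺(u) > deg⁻(u) and deg⁻(z) > deg⁺(z), decreases Σ_v |deg⁺(v) − deg⁻(v)|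
by exactly 2. The graph G′ is G with the edges in the range of `f` removed. -/
theorem remove_trail_degree_sum (V E : Type) [Fintype V] [DecidableEq V]
    [Fintype E] [DecidableEq E] (tail head : E → V)
    (m : ℕ) (u : Fin (m + 1) → V) (f : Fin m → E)
    (hwalk : IsWalk tail head u f) (htrail : Function.Injective f)
    (hne : u 0 ≠ u (Fin.last m))
    (hu : (Finset.univ.filter fun e => head e = u 0).card <
      (Finset.univ.filter fun e => tail e = u 0).card)
    (hz : (Finset.univ.filter fun e => tail e = u (Fin.last m)).card <
      (Finset.univ.filter fun e => head e = u (Fin.last m)).card) :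
    ∑ v : V,
        |((Finset.univ.filter fun e =>
            tail e = v ∧ e ∉ Finset.univ.image f).card : ℤ) -
          ((Finset.univ.filter fun e =>
            head e = v ∧ e ∉ Finset.univ.image f).card : ℤ)| =
      ∑ v : V,
          |((Finset.univ.filter fun e => tail e = v).card : ℤ) -
            ((Finset.univ.filter fun e => head e = v).card : ℤ)| - 2 := by
  classical
  -- card decomposition for any vertex function g
  have split : ∀ (g : E → V) (v : V),
      (Finset.univ.filter fun e => g e = v ∧ e ∉ Finset.univ.image f).card
        + (Finset.univ.filter fun r : Fin m => g (f r) = v).card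
      = (Finset.univ.filter fun e => g e = v).card := by
    intro g v
    have h1 : (Finset.univ.filter fun e => g e = v ∧ e ∉ Finset.univ.image f)
        = (Finset.univ.filter fun e => g e = v).filter
            (fun e => ¬ e ∈ Finset.univ.image f) := by
      rw [Finset.filter_filter]
    have h2 : (Finset.univ.filter fun e => g e = v).filter
          (fun e => e ∈ Finset.univ.image f)
        = (Finset.univ.filter fun r : Fin m => g (f r) = v).image f := by
      ext e
      simp only [Finset.mem_filter, Finset.mem_image, Finset.mem_univ, true_and]
      constructor
      · rintro ⟨hg, r, hr⟩
        exact ⟨r, by rw [hr]; exact hg, hr⟩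
      · rintro ⟨r, hg, hr⟩
        exact ⟨by rw [← hr]; exact hg, r, hr⟩
    have h3 := Finset.card_filter_add_card_filter_not
      (s := Finset.univ.filter fun e => g e = v)
      (p := fun e => e ∈ Finset.univ.image f)
    rw [h2, Finset.card_image_of_injective _ htrail] at h3
    rw [h1]
    omega
  have keyT : ∀ v : V,
      ((Finset.univ.filter fun e => tail e = v ∧ e ∉ Finset.univ.image f).card : ℤ)
      = ((Finset.univ.filter fun e => tail e = v).card : ℤ)
        - ∑ r : Fin m, (if u r.castSucc = v then (1:ℤ) else 0) := by
    intro v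
    have h := split tail v
    have hc : (Finset.univ.filter fun r : Fin m => tail (f r) = v)
        = (Finset.univ.filter fun r : Fin m => u r.castSucc = v) := by
      apply Finset.filter_congr
      intro r _
      rw [(hwalk r).1]
    rw [hc] at h
    have hsum : ((Finset.univ.filter fun r : Fin m => u r.castSucc = v).card : ℤ)
        = ∑ r : Fin m, (if u r.castSucc = v then (1:ℤ) else 0) := by
      rw [Finset.card_filter]
      push_cast
      rfl
    rw [← hsum]
    omega
  have keyH : ∀ v : V,
      ((Finset.univ.filter fun e => head e = v ∧ e ∉ Finset.univ.image f).card : ℤ)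
      = ((Finset.univ.filter fun e => head e = v).card : ℤ)
        - ∑ r : Fin m, (if u r.succ = v then (1:ℤ) else 0) := by
    intro v
    have h := split head v
    have hc : (Finset.univ.filter fun r : Fin m => head (f r) = v)
        = (Finset.univ.filter fun r : Fin m => u r.succ = v) := by
      apply Finset.filter_congr
      intro r _
      rw [(hwalk r).2]
    rw [hc] at h
    have hsum : ((Finset.univ.filter fun r : Fin m => u r.succ = v).card : ℤ)
        = ∑ r : Fin m, (if u r.succ = v then (1:ℤ) else 0) := by
      rw [Finset.card_filter]
      push_cast
      rfl
    rw [← hsum]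
    omega
  -- telescoping of indicator sums
  have tele : ∀ v : V,
      (∑ r : Fin m, (if u r.castSucc = v then (1:ℤ) else 0))
        - (∑ r : Fin m, (if u r.succ = v then (1:ℤ) else 0))
      = (if u 0 = v then (1:ℤ) else 0) - (if u (Fin.last m) = v then (1:ℤ) else 0) := by
    intro v
    have h1 := Fin.sum_univ_castSucc (f := fun i : Fin (m+1) => if u i = v then (1:ℤ) else 0)
    have h2 := Fin.sum_univ_succ (f := fun i : Fin (m+1) => if u i = v then (1:ℤ) else 0)
    linarith [h1, h2]
  -- pointwise abs identity
  set X : V → ℤ := fun v =>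
    ((Finset.univ.filter fun e => tail e = v).card : ℤ)
      - ((Finset.univ.filter fun e => head e = v).card : ℤ) with hX
  have hXu : 1 ≤ X (u 0) := by
    simp only [hX]
    omega
  have hXz : X (u (Fin.last m)) ≤ -1 := by
    simp only [hX]
    omega
  have point : ∀ v : V,
      |((Finset.univ.filter fun e =>
            tail e = v ∧ e ∉ Finset.univ.image f).card : ℤ) -
          ((Finset.univ.filter fun e =>
            head e = v ∧ e ∉ Finset.univ.image f).card : ℤ)|
      = |X v| - (if u 0 = v then (1:ℤ) else 0) - (if u (Fin.last m) = v then (1:ℤ) else 0) := by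
    intro v
    rw [keyT v, keyH v]
    have : ((Finset.univ.filter fun e => tail e = v).card : ℤ)
        - ∑ r : Fin m, (if u r.castSucc = v then (1:ℤ) else 0)
        - (((Finset.univ.filter fun e => head e = v).card : ℤ)
            - ∑ r : Fin m, (if u r.succ = v then (1:ℤ) else 0))
        = X v - ((if u 0 = v then (1:ℤ) else 0) - (if u (Fin.last m) = v then (1:ℤ) else 0)) := by
      have := tele v
      simp only [hX]
      linarith
    rw [this]
    by_cases h0 : u 0 = v
    · have hl : ¬ u (Fin.last m) = v := by rw [← h0]; exact fun h => hne h.symm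
      simp only [h0, hl, if_true, if_false]
      rw [← h0] at *
      rw [abs_of_nonneg (by linarith), abs_of_nonneg (by linarith)]
      ring
    · by_cases hl : u (Fin.last m) = v
      · simp only [h0, hl, if_true, if_false]
        rw [← hl] at *
        rw [abs_of_nonpos (by linarith), abs_of_nonpos (by linarith)]
        ring
      · simp only [h0, hl, if_false]
        ring_nf
  calc ∑ v : V, |((Finset.univ.filter fun e =>
            tail e = v ∧ e ∉ Finset.univ.image f).card : ℤ) -
          ((Finset.univ.filter fun e =>
            head e = v ∧ e ∉ Finset.univ.image f).card : ℤ)|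
      = ∑ v : V, (|X v| - (if u 0 = v then (1:ℤ) else 0)
          - (if u (Fin.last m) = v then (1:ℤ) else 0)) := by
        exact Finset.sum_congr rfl fun v _ => point v
    _ = (∑ v : V, |X v|) - (∑ v : V, (if u 0 = v then (1:ℤ) else 0))
          - (∑ v : V, (if u (Fin.last m) = v then (1:ℤ) else 0)) := by
        rw [Finset.sum_sub_distrib, Finset.sum_sub_distrib]
    _ = (∑ v : V, |X v|) - 2 := by
        rw [Finset.sum_ite_eq, Finset.sum_ite_eq]
        simp
        ring
end

section
/- Let d ≥ 0, Δ = 2^d, n ≥ 1, let k ≥ 1 be a power of two, and let a, b : {1,…,n} → {1,…,Δ}² be sequences of points such that the multiset T has at most k distinct points. For each j ∈ {0,…,d}, let (2^j, v_j) be a grid with cell size 2^j and arbitrary shift v_j ∈ {0,…,2^j−1}². Then EMD(a,b) ≤ 2nk + k²·Σ_{j=0}^{d} 2^j·D_{2^j,v_j}(a,b). -/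
/-- The grid ℓ1-difference D_{L,v}(a,b) = Σ_{c∈ℤ²} |#{i : cell(a i) = c} − #{i : cell(b i) = c}|,
where the (finite) sum is taken over the cells actually occupied (all other terms vanish). -/
def D {n : ℕ} (L : ℕ) (v : ℤ × ℤ) (a b : Fin n → ℤ × ℤ) : ℤ :=
  ∑ c ∈ ((Finset.univ.image fun i => cell L v (a i)) ∪
         (Finset.univ.image fun i => cell L v (b i))),
    |((Finset.univ.filter fun i => cell L v (a i) = c).card : ℤ) -
      ((Finset.univ.filter fun i => cell L v (b i) = c).card : ℤ)|

/-!
If `p` and `q` first share a grid cell at level `ℓ` then `‖p - q‖₁ < 2 ^ (ℓ + 1)`, so the cost of a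
matching `σ` is at most `∑ⱼ 2 ^ (j + 1) · #{i | a i, b (σ i) share no cell at a level ≤ j}`.
At a single level an optimal matching of cells leaves at most `D / 2` indices unmatched. These
per-level matchings are merged from the coarsest level down: the new level's matching is
followed only along those cycles of the discrepancy permutation that it matches entirely.
After making the cycles visit each point of `T` at most once, each mismatch spoils at most
`k` indices, whence `EMD a b ≤ k · ∑ⱼ 2 ^ j · D_j`.
-/

open Finset Equiv

theorem abs_sub_lt_of_sub_ediv_eq {L x y w : ℤ} (hL : 0 < L) (h : (x - w) / L = (y - w) / L) :
    |x - y| < L := by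
  have hx := Int.emod_add_mul_ediv (x - w) L
  have hy := Int.emod_add_mul_ediv (y - w) L
  have := Int.emod_nonneg (x - w) hL.ne'
  have := Int.emod_nonneg (y - w) hL.ne'
  have := Int.emod_lt_of_pos (x - w) hL
  have := Int.emod_lt_of_pos (y - w) hL
  rw [h] at hx
  rw [abs_sub_lt_iff]
  constructor <;> linarith

theorem l1_sub_le_of_cell_eq {L : ℕ} (hL : 0 < L) {v p q : ℤ × ℤ} (h : cell L v p = cell L v q) :
    l1 (p - q) ≤ 2 * L - 2 := by
  have hL' : (0 : ℤ) < L := by exact_mod_cast hL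
  have h₁ := abs_sub_lt_of_sub_ediv_eq hL' (congrArg Prod.fst h)
  have h₂ := abs_sub_lt_of_sub_ediv_eq hL' (congrArg Prod.snd h)
  simp only [l1, Prod.fst_sub, Prod.snd_sub]
  omega

theorem l1_sub_le_of_mem_box {N : ℤ} {p q : ℤ × ℤ} (hp : 1 ≤ p.1 ∧ p.1 ≤ N ∧ 1 ≤ p.2 ∧ p.2 ≤ N)
    (hq : 1 ≤ q.1 ∧ q.1 ≤ N ∧ 1 ≤ q.2 ∧ q.2 ≤ N) : l1 (p - q) ≤ 2 * N - 2 := by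
  have h₁ : |p.1 - q.1| ≤ N - 1 := abs_sub_le_iff.mpr ⟨by omega, by omega⟩
  have h₂ : |p.2 - q.2| ≤ N - 1 := abs_sub_le_iff.mpr ⟨by omega, by omega⟩
  simp only [l1, Prod.fst_sub, Prod.snd_sub]
  omega

def SharesCellUpTo (v : ℕ → ℤ × ℤ) (j : ℕ) (p q : ℤ × ℤ) : Prop :=
  ∃ j' ≤ j, cell (2 ^ j') (v j') p = cell (2 ^ j') (v j') q

instance (v : ℕ → ℤ × ℤ) (j : ℕ) (p q : ℤ × ℤ) : Decidable (SharesCellUpTo v j p q) :=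
  inferInstanceAs (Decidable (∃ j' ≤ j, _))

theorem sharesCellUpTo_mono (v : ℕ → ℤ × ℤ) (p q : ℤ × ℤ) :
    Monotone fun j => SharesCellUpTo v j p q :=
  fun _ _ hj ⟨j', hj', h⟩ => ⟨j', hj'.trans hj, h⟩

/-- If `p` and `q` first share a cell at level `ℓ`, then `l1 (p - q) ≤ 2 ^ (ℓ + 1) - 2`, which is
exactly the contribution of the levels below `ℓ`. -/
theorem l1_sub_le_sum_not_sharesCellUpTo {d : ℕ} (v : ℕ → ℤ × ℤ) {p q : ℤ × ℤ}
    (hp : 1 ≤ p.1 ∧ p.1 ≤ 2 ^ d ∧ 1 ≤ p.2 ∧ p.2 ≤ 2 ^ d)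
    (hq : 1 ≤ q.1 ∧ q.1 ≤ 2 ^ d ∧ 1 ≤ q.2 ∧ q.2 ≤ 2 ^ d) :
    l1 (p - q) ≤
      ∑ j ∈ (range (d + 1)).filter (fun j => ¬ SharesCellUpTo v j p q), 2 ^ (j + 1) := by
  have hgeom : ∀ ℓ, ∑ j ∈ range ℓ, (2 : ℤ) ^ (j + 1) = 2 * 2 ^ ℓ - 2 := by
    intro ℓ
    induction ℓ with
    | zero => simp
    | succ ℓ ih => rw [sum_range_succ, ih]; ring
  have hle : ∀ ℓ ≤ d + 1, (∀ j < ℓ, ¬ SharesCellUpTo v j p q) →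
      2 * 2 ^ ℓ - 2 ≤ ∑ j ∈ (range (d + 1)).filter (fun j => ¬ SharesCellUpTo v j p q),
        (2 : ℤ) ^ (j + 1) := by
    intro ℓ hℓ hnot
    rw [← hgeom]
    refine sum_le_sum_of_subset_of_nonneg (fun j hj => ?_) (fun _ _ _ => by positivity)
    have hj := mem_range.mp hj
    exact mem_filter.mpr ⟨mem_range.mpr (by omega), hnot j hj⟩
  by_cases hmeet : ∃ j, j ≤ d ∧ cell (2 ^ j) (v j) p = cell (2 ^ j) (v j) q
  · obtain ⟨hℓd, hℓ⟩ := Nat.find_spec hmeet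
    calc l1 (p - q) ≤ 2 * ((2 ^ Nat.find hmeet : ℕ) : ℤ) - 2 :=
          l1_sub_le_of_cell_eq (by positivity) hℓ
      _ ≤ _ := by
        push_cast
        refine hle _ (by omega) fun j hj ⟨j', hj', h⟩ => ?_
        exact Nat.find_min hmeet (hj'.trans_lt hj) ⟨by omega, h⟩
  · calc l1 (p - q) ≤ 2 * 2 ^ (d + 1) - 2 := by
          have := l1_sub_le_of_mem_box hp hq
          rw [pow_succ]
          linarith [pow_pos (two_pos : (0 : ℤ) < 2) d]
      _ ≤ _ := hle (d + 1) le_rfl fun j hj ⟨j', hj', h⟩ => hmeet ⟨j', by omega, h⟩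

theorem sum_l1_sub_le_sum_card_not_sharesCellUpTo {ι : Type*} [Fintype ι] {d : ℕ}
    (v : ℕ → ℤ × ℤ) {p q : ι → ℤ × ℤ}
    (hp : ∀ i, 1 ≤ (p i).1 ∧ (p i).1 ≤ 2 ^ d ∧ 1 ≤ (p i).2 ∧ (p i).2 ≤ 2 ^ d)
    (hq : ∀ i, 1 ≤ (q i).1 ∧ (q i).1 ≤ 2 ^ d ∧ 1 ≤ (q i).2 ∧ (q i).2 ≤ 2 ^ d) :
    ∑ i, l1 (p i - q i) ≤
      ∑ j ∈ range (d + 1), 2 ^ j * (2 * #{i | ¬ SharesCellUpTo v j (p i) (q i)} : ℤ) := by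
  calc ∑ i, l1 (p i - q i)
      ≤ ∑ i, ∑ j ∈ (range (d + 1)).filter (fun j => ¬ SharesCellUpTo v j (p i) (q i)),
          (2 : ℤ) ^ (j + 1) :=
        sum_le_sum fun i _ => l1_sub_le_sum_not_sharesCellUpTo v (hp i) (hq i)
    _ = ∑ j ∈ range (d + 1), ∑ _i ∈ {i | ¬ SharesCellUpTo v j (p i) (q i)}, (2 : ℤ) ^ (j + 1) :=
        sum_comm' fun i j => by simp only [mem_filter, mem_univ, true_and]; tauto
    _ = _ := sum_congr rfl fun j _ => by rw [sum_const, nsmul_eq_mul, pow_succ]; ring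

/-- If some fibre were matched less, one swap would match more indices. -/
theorem min_card_fiber_le_of_forall_card_le {ι α : Type*} [Fintype ι] [DecidableEq ι]
    [DecidableEq α] {g h : ι → α} {τ : Perm ι}
    (hτ : ∀ τ' : Perm ι, #{i | g i = h (τ' i)} ≤ #{i | g i = h (τ i)}) (c : α) :
    min #{i | g i = c} #{i | h i = c} ≤ #{i | g i = c ∧ h (τ i) = c} := by
  by_contra! hlt
  have hτc : #{i | h (τ i) = c} = #{i | h i = c} := card_equiv τ (by simp)
  obtain ⟨i, hi, hi'⟩ := exists_mem_notMem_of_card_lt_card (lt_min_iff.mp hlt).1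
  obtain ⟨i', hj, hj'⟩ := exists_mem_notMem_of_card_lt_card (hτc ▸ (lt_min_iff.mp hlt).2)
  simp only [mem_filter, mem_univ, true_and, not_and] at hi hi' hj hj'
  have hτi : h (τ i) ≠ c := hi' hi
  have hgi' : g i' ≠ c := fun e => hj' e hj
  have hsub : univ.filter (fun x => g x = h (τ x)) ⊆
      univ.filter (fun x => g x = h ((τ * swap i i') x)) := by
    intro x hx
    simp only [mem_filter, mem_univ, true_and] at hx ⊢
    rw [Perm.mul_apply, swap_apply_of_ne_of_ne]
    · exact hx
    · rintro rfl; exact hτi (hx.symm.trans hi)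
    · rintro rfl; exact hgi' (hx.trans hj)
  refine (hτ (τ * swap i i')).not_gt (card_lt_card ?_)
  refine (ssubset_iff_of_subset hsub).mpr ⟨i, ?_, ?_⟩
  · exact mem_filter.mpr ⟨mem_univ _, by simp [hi, hj]⟩
  · simpa using fun e => hτi (e.symm.trans hi)

theorem exists_perm_two_mul_card_ne_le {ι α : Type*} [Fintype ι] [DecidableEq α] (g h : ι → α) :
    ∃ τ : Perm ι, 2 * (#{i | g i ≠ h (τ i)} : ℤ) ≤
      ∑ c ∈ univ.image g ∪ univ.image h, |(#{i | g i = c} : ℤ) - #{i | h i = c}| := by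
  classical
  obtain ⟨τ, -, hτ⟩ := exists_max_image univ (fun τ : Perm ι => #{i | g i = h (τ i)})
    ⟨1, mem_univ _⟩
  refine ⟨τ, ?_⟩
  set U := univ.image g ∪ univ.image h
  have hsum : ∀ f : ι → α, (∀ i, f i ∈ U) →
      (Fintype.card ι : ℤ) = ∑ c ∈ U, (#{i | f i = c} : ℤ) :=
    fun f hf => mod_cast card_eq_sum_card_fiberwise fun i _ => hf i
  have hmatched : #{i | g i = h (τ i)} = ∑ c ∈ U, #{i | g i = c ∧ h (τ i) = c} := by
    rw [card_eq_sum_card_fiberwise (f := g) (t := U) fun i _ => mem_union_left _ (by simp)]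
    refine sum_congr rfl fun c _ => congrArg card (?_ : _ = _)
    ext i
    simp only [mem_filter, mem_univ, true_and]
    constructor
    · rintro ⟨hm, rfl⟩; exact ⟨rfl, hm.symm⟩
    · rintro ⟨rfl, hc⟩; exact ⟨hc.symm, rfl⟩
  have hmin : ∑ c ∈ U, min (#{i | g i = c} : ℤ) #{i | h i = c} ≤ #{i | g i = h (τ i)} := by
    simp only [← Nat.cast_min]
    exact_mod_cast hmatched ▸ sum_le_sum fun c _ =>
      min_card_fiber_le_of_forall_card_le (fun τ' => hτ τ' (mem_univ _)) c
  have hsplit := card_filter_add_card_filter_not (s := univ) (fun i => g i = h (τ i))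
  have habs : ∀ x y : ℤ, |x - y| = x + y - 2 * min x y := fun x y => by
    linarith [min_add_max x y, max_sub_min_eq_abs' x y]
  rw [sum_congr rfl fun c _ => habs _ _, sum_sub_distrib, sum_add_distrib, ← mul_sum,
    ← hsum g fun i => mem_union_left _ (by simp), ← hsum h fun i => mem_union_right _ (by simp)]
  rw [card_univ] at hsplit
  push_cast [← hsplit]
  linarith

namespace Equiv.Perm

section Swap

variable {α : Type*} [DecidableEq α] {f : Perm α} {x y : α}

theorem SameCycle.of_swap_mul (hxy : f.SameCycle x y) {u w : α}
    (h : (swap x y * f).SameCycle u w) : f.SameCycle u w := by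
  have hstep : ∀ z, f.SameCycle z ((swap x y * f) z) := by
    intro z
    have hz : f.SameCycle z (f z) := sameCycle_apply_right.mpr (SameCycle.refl _ _)
    rw [mul_apply, swap_apply_def]
    split_ifs with h₁ h₂
    · exact (h₁ ▸ hz).trans hxy
    · exact (h₂ ▸ hz).trans hxy.symm
    · exact hz
  obtain ⟨s, rfl⟩ := h
  induction s using Int.induction_on with
  | zero => exact SameCycle.refl _ _
  | succ s ih => rw [add_comm, zpow_one_add, mul_apply]; exact ih.trans (hstep _)
  | pred s ih =>
    rw [sub_eq_neg_add, zpow_add, zpow_neg_one, mul_apply]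
    have := hstep ((swap x y * f)⁻¹ (((swap x y * f) ^ (-(s : ℤ))) u))
    simp only [coe_inv, apply_symm_apply] at this
    exact ih.trans this.symm

/-- The arc of the `f`-cycle from `y` up to `x` becomes a cycle of its own. -/
theorem not_sameCycle_swap_mul [Finite α] (hxy : x ≠ y) (h : f.SameCycle y x) :
    ¬ (swap x y * f).SameCycle y x := by
  have hex : ∃ q, (f ^ (q + 1)) y = x := by
    obtain ⟨_ | q, hq⟩ := h.exists_nat_pow_eq
    · exact absurd hq hxy.symm
    · exact ⟨q, hq⟩
  obtain ⟨q, hq, hmin⟩ : ∃ q, (f ^ (q + 1)) y = x ∧ ∀ t < q, (f ^ (t + 1)) y ≠ x :=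
    ⟨Nat.find hex, Nat.find_spec hex, fun _ => Nat.find_min hex⟩
  have horbit : ∀ s : ℕ, ∃ t ≤ q, ((swap x y * f) ^ s) y = (f ^ t) y := by
    intro s
    induction s with
    | zero => exact ⟨0, Nat.zero_le _, rfl⟩
    | succ s ih =>
      obtain ⟨t, htq, ht⟩ := ih
      rw [pow_succ', mul_apply, ht, mul_apply, ← mul_apply f, ← pow_succ']
      rcases htq.lt_or_eq with htq | rfl
      · have hne : (f ^ (t + 1)) y ≠ y := by
          intro hy
          refine hmin (q - t - 1) (by omega) ?_
          rwa [show q + 1 = (q - t - 1 + 1) + (t + 1) by omega, pow_add, mul_apply, hy] at hq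
        exact ⟨t + 1, htq, swap_apply_of_ne_of_ne (hmin t htq) hne⟩
      · exact ⟨0, Nat.zero_le _, by rw [hq, swap_apply_left, pow_zero, one_apply]⟩
  intro hsc
  obtain ⟨s, hs⟩ := hsc.exists_nat_pow_eq
  obtain ⟨_ | t, htq, ht⟩ := horbit s
  · exact hxy (hs.symm.trans ht)
  · exact hmin t (by omega) (ht.symm.trans hs)

end Swap

/-- Take `π` with the fewest colliding pairs: swapping two points of a cycle with equal
`b`-values splits that cycle without changing `b ∘ π`. -/
theorem exists_comp_eq_and_sameCycle_injective {α β : Type*} [Fintype α] (b : α → β)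
    (ρ : Perm α) : ∃ π : Perm α, b ∘ π = b ∘ ρ ∧ ∀ x y, π.SameCycle x y → b x = b y → x = y := by
  classical
  let collisions : Perm α → Finset (α × α) := fun π =>
    {xy | xy.1 ≠ xy.2 ∧ π.SameCycle xy.1 xy.2 ∧ b xy.1 = b xy.2}
  obtain ⟨π, hπ, hmin⟩ := exists_min_image (univ.filter fun π : Perm α => b ∘ π = b ∘ ρ)
    (fun π => #(collisions π)) ⟨ρ, by simp⟩
  have hπ : b ∘ π = b ∘ ρ := (mem_filter.mp hπ).2
  refine ⟨π, hπ, fun x y hxy hb => ?_⟩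
  by_contra hne
  have hswap : b ∘ (swap x y * π) = b ∘ π := by
    funext z
    simp only [Function.comp_apply, mul_apply, swap_apply_def]
    split_ifs with h₁ h₂
    · rw [h₁, hb]
    · rw [h₂, hb]
    · rfl
  refine (hmin _ (mem_filter.mpr ⟨mem_univ _, hswap.trans hπ⟩)).not_gt (card_lt_card ?_)
  refine (ssubset_iff_of_subset fun p hp => ?_).mpr ⟨(y, x), ?_, ?_⟩
  · simp only [collisions, mem_filter, mem_univ, true_and] at hp ⊢
    exact ⟨hp.1, hxy.of_swap_mul hp.2.1, hp.2.2⟩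
  · simp [collisions, Ne.symm hne, hxy.symm, hb]
  · simp [collisions, not_sameCycle_swap_mul hne hxy.symm]

end Equiv.Perm

/-- Follow `τ` on the cycles of `σ⁻¹ * τ` (made `b`-injective) that contain no failure of `P`,
and `σ` elsewhere: each failure of `τ` spoils one cycle, of length at most `#(image b)`. -/
theorem exists_perm_card_not_le_and_eq_of_not {ι β : Type*} [Fintype ι] [DecidableEq β]
    (b : ι → β) (P : ι → β → Prop) [∀ i y, Decidable (P i y)] (σ τ : Perm ι) :
    ∃ σ' : Perm ι, #{i | ¬ P i (b (σ' i))} ≤ #(univ.image b) * #{i | ¬ P i (b (τ i))} ∧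
      ∀ i, P i (b (σ' i)) ∨ σ' i = σ i := by
  classical
  obtain ⟨π, hπ, hinj⟩ := Perm.exists_comp_eq_and_sameCycle_injective (b ∘ σ) (σ⁻¹ * τ)
  have hπτ : ∀ i, b (σ (π i)) = b (τ i) := fun i => by simpa using congrFun hπ i
  let Clean : ι → Prop := fun i => ∀ i', π.SameCycle i i' → P i' (b (σ (π i')))
  have hClean : ∀ i, Clean (π i) ↔ Clean i := fun i =>
    forall_congr' fun i' => imp_congr_left Perm.sameCycle_apply_left
  let σ' := σ * Perm.ofSubtype (π.subtypePerm hClean)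
  have hgood : ∀ i, Clean i → P i (b (σ' i)) := fun i hi => by
    simpa [σ', Perm.ofSubtype_apply_of_mem _ hi] using hi i (Perm.SameCycle.refl _ _)
  refine ⟨σ', ?_, fun i => ?_⟩
  · have hcycle : ∀ i', #{i | π.SameCycle i i'} ≤ #(univ.image b) := fun i' =>
      card_le_card_of_injOn (b ∘ σ) (fun i _ => by simp) fun i hi j hj hij =>
        hinj i j ((mem_filter.mp hi).2.trans (mem_filter.mp hj).2.symm) hij
    calc #{i | ¬ P i (b (σ' i))}
        ≤ #{i | ¬ Clean i} := card_le_card fun i => by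
          simpa only [mem_filter, mem_univ, true_and] using mt (hgood i)
      _ ≤ #((univ.filter fun i' => ¬ P i' (b (τ i'))).biUnion
            fun i' => {i | π.SameCycle i i'}) :=
          card_le_card fun i hi => by
            obtain ⟨i', hii', hP⟩ := not_forall₂.mp (mem_filter.mp hi).2
            simp only [mem_biUnion, mem_filter, mem_univ, true_and]
            exact ⟨i', hπτ i' ▸ hP, hii'⟩
      _ ≤ ∑ i' ∈ {i' | ¬ P i' (b (τ i'))}, #{i | π.SameCycle i i'} := card_biUnion_le
      _ ≤ _ := by
          rw [mul_comm, ← smul_eq_mul, ← sum_const]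
          exact sum_le_sum fun i' _ => hcycle i'
  · by_cases hi : Clean i
    · exact .inl (hgood i hi)
    · exact .inr (by simp [σ', Perm.ofSubtype_apply_of_not_mem _ hi])

/-- Fix the levels from the top down: by monotonicity of `G`, an index that the new permutation
takes from `τ j₀` is good at every level above `j₀`, and the others keep their old partner. -/
theorem exists_perm_forall_card_not_le {ι β : Type*} [Fintype ι] [DecidableEq β] (b : ι → β)
    (G : ℕ → ι → β → Prop) [∀ j i y, Decidable (G j i y)]
    (hG : ∀ i y, Monotone fun j => G j i y)
    (τ : ℕ → Perm ι) (D : ℕ) :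
    ∃ σ : Perm ι, ∀ j < D,
      #{i | ¬ G j i (b (σ i))} ≤ #(univ.image b) * #{i | ¬ G j i (b (τ j i))} := by
  suffices h : ∀ N ≤ D, ∃ σ : Perm ι, ∀ j, N ≤ j → j < D →
      #{i | ¬ G j i (b (σ i))} ≤ #(univ.image b) * #{i | ¬ G j i (b (τ j i))} by
    obtain ⟨σ, hσ⟩ := h 0 (Nat.zero_le _)
    exact ⟨σ, fun j => hσ j (Nat.zero_le _)⟩
  intro N hN
  induction hN using Nat.decreasingInduction with
  | self => exact ⟨1, fun j hDj hjD => absurd hjD (not_lt.mpr hDj)⟩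
  | of_succ j₀ _ ih =>
    obtain ⟨σ, hσ⟩ := ih
    obtain ⟨σ', hbad, hkeep⟩ := exists_perm_card_not_le_and_eq_of_not b (G j₀) σ (τ j₀)
    refine ⟨σ', fun j hj₀j hjD => ?_⟩
    rcases hj₀j.eq_or_lt with rfl | hlt
    · exact hbad
    · refine le_trans (card_le_card fun i hi => ?_) (hσ j hlt hjD)
      simp only [mem_filter, mem_univ, true_and] at hi ⊢
      rcases hkeep i with hgood | heq
      · exact absurd (hG i _ hlt.le hgood) hi
      · rwa [← heq]

theorem D_nonneg {n : ℕ} (L : ℕ) (v : ℤ × ℤ) (a b : Fin n → ℤ × ℤ) : 0 ≤ D L v a b :=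
  sum_nonneg fun _ _ => abs_nonneg _

theorem exists_perm_two_mul_card_not_sharesCellUpTo_le {n : ℕ} (a b : Fin n → ℤ × ℤ)
    (v : ℕ → ℤ × ℤ) (N : ℕ) :
    ∃ σ : Perm (Fin n), ∀ j < N, 2 * (#{i | ¬ SharesCellUpTo v j (a i) (b (σ i))} : ℤ) ≤
      #(univ.image b) * D (2 ^ j) (v j) a b := by
  choose τ hτ using fun j => exists_perm_two_mul_card_ne_le
    (fun i => cell (2 ^ j) (v j) (a i)) (fun i => cell (2 ^ j) (v j) (b i))
  obtain ⟨σ, hσ⟩ := exists_perm_forall_card_not_le b (fun j i => SharesCellUpTo v j (a i))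
    (fun i => sharesCellUpTo_mono v (a i)) τ N
  refine ⟨σ, fun j hj => ?_⟩
  have hfar : #{i | ¬ SharesCellUpTo v j (a i) (b (τ j i))} ≤
      #{i | cell (2 ^ j) (v j) (a i) ≠ cell (2 ^ j) (v j) (b (τ j i))} :=
    card_le_card fun i => by
      simpa only [mem_filter, mem_univ, true_and] using mt fun h => ⟨j, le_rfl, h⟩
  have hbad : (#{i | ¬ SharesCellUpTo v j (a i) (b (σ i))} : ℤ) ≤
      #(univ.image b) * #{i | cell (2 ^ j) (v j) (a i) ≠ cell (2 ^ j) (v j) (b (τ j i))} :=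
    mod_cast (hσ j hj).trans (Nat.mul_le_mul_left _ hfar)
  calc 2 * (#{i | ¬ SharesCellUpTo v j (a i) (b (σ i))} : ℤ)
      ≤ #(univ.image b) * (2 * #{i | cell (2 ^ j) (v j) (a i) ≠ cell (2 ^ j) (v j) (b (τ j i))}) :=
        by linarith
    _ ≤ #(univ.image b) * D (2 ^ j) (v j) a b :=
        mul_le_mul_of_nonneg_left (hτ j) (Nat.cast_nonneg _)

theorem emd_le_grid_diffs_general (d n k : ℕ)
    (a b : Fin n → ℤ × ℤ)
    (ha : ∀ i, 1 ≤ (a i).1 ∧ (a i).1 ≤ 2 ^ d ∧ 1 ≤ (a i).2 ∧ (a i).2 ≤ 2 ^ d)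
    (hb : ∀ i, 1 ≤ (b i).1 ∧ (b i).1 ≤ 2 ^ d ∧ 1 ≤ (b i).2 ∧ (b i).2 ≤ 2 ^ d)
    (hT : (Finset.univ.image b).card ≤ k)
    (v : ℕ → ℤ × ℤ) :
    EMD a b ≤ 2 * n * k +
      (k : ℤ) ^ 2 * ∑ j ∈ Finset.range (d + 1), 2 ^ j * D (2 ^ j) (v j) a b := by
  obtain ⟨σ, hσ⟩ := exists_perm_two_mul_card_not_sharesCellUpTo_le a b v (d + 1)
  have hk : (#(univ.image b) : ℤ) ≤ k ^ 2 := mod_cast hT.trans (Nat.le_self_pow two_ne_zero k)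
  calc EMD a b ≤ ∑ i, l1 (a i - b (σ i)) := inf'_le _ (mem_univ σ)
    _ ≤ ∑ j ∈ range (d + 1), 2 ^ j * (2 * #{i | ¬ SharesCellUpTo v j (a i) (b (σ i))} : ℤ) :=
        sum_l1_sub_le_sum_card_not_sharesCellUpTo v ha fun i => hb (σ i)
    _ ≤ ∑ j ∈ range (d + 1), 2 ^ j * ((k : ℤ) ^ 2 * D (2 ^ j) (v j) a b) := by
        refine sum_le_sum fun j hj => mul_le_mul_of_nonneg_left ?_ (by positivity)
        exact (hσ j (mem_range.mp hj)).trans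
          (mul_le_mul_of_nonneg_right hk (D_nonneg _ _ _ _))
    _ = (k : ℤ) ^ 2 * ∑ j ∈ range (d + 1), 2 ^ j * D (2 ^ j) (v j) a b := by
        rw [mul_sum]; exact sum_congr rfl fun j _ => by ring
    _ ≤ _ := le_add_of_nonneg_left (by positivity)

/-- for points in {1,…,Δ}² with Δ = 2^d, k ≥ 1 a power of two, T with
at most k distinct points, and arbitrary shifts v_j at levels j = 0,…,d,
EMD(a,b) ≤ 2nk + k²·Σ_{j=0}^{d} 2^j·D_{2^j,v_j}(a,b). -/
theorem emd_le_grid_diffs (d n k : ℕ) (hn : 1 ≤ n) (hk : ∃ t : ℕ, k = 2 ^ t)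
    (a b : Fin n → ℤ × ℤ)
    (ha : ∀ i, 1 ≤ (a i).1 ∧ (a i).1 ≤ 2 ^ d ∧ 1 ≤ (a i).2 ∧ (a i).2 ≤ 2 ^ d)
    (hb : ∀ i, 1 ≤ (b i).1 ∧ (b i).1 ≤ 2 ^ d ∧ 1 ≤ (b i).2 ∧ (b i).2 ≤ 2 ^ d)
    (hT : (Finset.univ.image b).card ≤ k)
    (v : ℕ → ℤ × ℤ)
    (hv : ∀ j ≤ d, 0 ≤ (v j).1 ∧ (v j).1 < 2 ^ j ∧ 0 ≤ (v j).2 ∧ (v j).2 < 2 ^ j) :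
    EMD a b ≤ 2 * n * k +
      (k : ℤ) ^ 2 * ∑ j ∈ Finset.range (d + 1), 2 ^ j * D (2 ^ j) (v j) a b :=
  emd_le_grid_diffs_general d n k a b ha hb hT v
end

section
/- Let L ≥ 1 be an integer, let s > 0 be a real number, let x ∈ ℝ², and let Q = [x₁ − s/2, x₁ + s/2] × [x₂ − s/2, x₂ + s/2]. If v is chosen uniformly at random from {0,…,L−1}², then the probability that there exist lattice points y, z ∈ Q ∩ ℤ² with cell_{L,v}(y) ≠ cell_{L,v}(z) is at most 2s/L. -/
open Finset

theorem sub_ediv_eq_of_mem_Icc {L : ℕ} {a b v y : ℤ} (hab : (a - v) / L = (b - v) / L)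
    (hy : y ∈ Set.Icc a b) : (y - v) / L = (a - v) / L := by
  rcases L.eq_zero_or_pos with rfl | hL
  · simp
  have hL' : (0 : ℤ) < L := by exact_mod_cast hL
  have hay := Int.ediv_le_ediv hL' (sub_le_sub_right hy.1 v)
  have hyb := Int.ediv_le_ediv hL' (sub_le_sub_right hy.2 v)
  omega

/-- The witness is the left end of the cell containing `b`; it lies above `a` because `a` is in
an earlier cell. -/
theorem exists_mem_Ioc_emod_eq_of_sub_ediv_ne {L : ℕ} {a b v : ℤ} (hv : v ∈ Ico 0 (L : ℤ))
    (hab : a ≤ b) (h : (a - v) / L ≠ (b - v) / L) : ∃ k ∈ Ioc a b, k % L = v := by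
  obtain ⟨hv₀, hvL⟩ := mem_Ico.mp hv
  have hL : (0 : ℤ) < L := by omega
  refine ⟨v + L * ((b - v) / L), mem_Ioc.mpr ⟨?_, ?_⟩, ?_⟩
  · by_contra! hk
    have hle : (b - v) / L ≤ (a - v) / L := Int.le_ediv_of_mul_le hL (by linarith)
    have hge := Int.ediv_le_ediv hL (sub_le_sub_right hab v)
    omega
  · have := Int.mul_ediv_add_emod (b - v) L
    have := Int.emod_nonneg (b - v) hL.ne'
    omega
  · rw [Int.add_mul_emod_self_left, Int.emod_eq_of_lt hv₀ hvL]

open scoped Classical in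
noncomputable def splitShifts (L : ℕ) (S : Set ℤ) : Finset ℤ :=
  {v ∈ Ico 0 (L : ℤ) | ∃ y ∈ S, ∃ z ∈ S, (y - v) / L ≠ (z - v) / L}

open scoped Classical in
theorem mem_splitShifts {L : ℕ} {S : Set ℤ} {v : ℤ} : v ∈ splitShifts L S ↔
    v ∈ Ico 0 (L : ℤ) ∧ ∃ y ∈ S, ∃ z ∈ S, (y - v) / L ≠ (z - v) / L := by
  rw [splitShifts, mem_filter]

theorem card_splitShifts_Icc_le (L : ℕ) (a b : ℤ) :
    #(splitShifts L (Set.Icc a b)) ≤ (b - a).toNat := by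
  calc #(splitShifts L (Set.Icc a b)) ≤ #((Ioc a b).image (· % (L : ℤ))) := by
        refine card_le_card fun v hv => ?_
        obtain ⟨hvI, y, hy, z, hz, hyz⟩ := mem_splitShifts.mp hv
        have hab : (a - v) / L ≠ (b - v) / L := fun h =>
          hyz (by rw [sub_ediv_eq_of_mem_Icc h hy, sub_ediv_eq_of_mem_Icc h hz])
        obtain ⟨k, hk, hkv⟩ := exists_mem_Ioc_emod_eq_of_sub_ediv_ne hvI (hy.1.trans hy.2) hab
        exact mem_image.mpr ⟨k, hk, hkv⟩
    _ ≤ #(Ioc a b) := card_image_le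
    _ = (b - a).toNat := Int.card_Ioc a b

theorem toNat_floor_sub_ceil_le {lo hi : ℝ} (h : lo ≤ hi) :
    ((⌊hi⌋ - ⌈lo⌉).toNat : ℝ) ≤ hi - lo := by
  rw [← Int.cast_natCast, Int.toNat_eq_max, Int.cast_max]
  push_cast
  exact max_le (by linarith [Int.floor_le hi, Int.le_ceil lo]) (by linarith)

theorem card_splitShifts_le (L : ℕ) {lo hi : ℝ} (h : lo ≤ hi) :
    (#(splitShifts L (Int.cast ⁻¹' Set.Icc lo hi)) : ℝ) ≤ hi - lo := by
  rw [Int.preimage_Icc]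
  exact (Nat.cast_le.mpr (card_splitShifts_Icc_le L _ _)).trans (toNat_floor_sub_ceil_le h)

open scoped Classical in
theorem card_filter_cell_ne_le (L : ℕ) (P : ℤ × ℤ → Prop) {S T : Set ℤ}
    (hP : ∀ y, P y → y.1 ∈ S ∧ y.2 ∈ T) :
    #{v ∈ Ico 0 (L : ℤ) ×ˢ Ico 0 (L : ℤ) | ∃ y z, P y ∧ P z ∧ cell L v y ≠ cell L v z} ≤
      #(splitShifts L S) * L + L * #(splitShifts L T) := by
  set I := Ico 0 (L : ℤ)
  have hsub : {v ∈ I ×ˢ I | ∃ y z, P y ∧ P z ∧ cell L v y ≠ cell L v z} ⊆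
      splitShifts L S ×ˢ I ∪ I ×ˢ splitShifts L T := by
    intro v hv
    rw [mem_filter, mem_product] at hv
    obtain ⟨⟨hv₁, hv₂⟩, y, z, hy, hz, hne⟩ := hv
    rw [cell, cell, Ne, Prod.ext_iff, not_and_or] at hne
    rcases hne with h | h
    · exact mem_union_left _ (mem_product.mpr
        ⟨mem_splitShifts.mpr ⟨hv₁, y.1, (hP y hy).1, z.1, (hP z hz).1, h⟩, hv₂⟩)
    · exact mem_union_right _ (mem_product.mpr
        ⟨hv₁, mem_splitShifts.mpr ⟨hv₂, y.2, (hP y hy).2, z.2, (hP z hz).2, h⟩⟩)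
  calc _ ≤ #(splitShifts L S ×ˢ I ∪ I ×ˢ splitShifts L T) := card_le_card hsub
    _ ≤ #(splitShifts L S ×ˢ I) + #(I ×ˢ splitShifts L T) := card_union_le _ _
    _ = _ := by simp [I, card_product]

open scoped Classical in
theorem square_split_probability_general (L : ℕ) (s : ℝ) (hs : 0 < s) (x : ℝ × ℝ) :
    (((Finset.Ico (0 : ℤ) (L : ℤ) ×ˢ Finset.Ico (0 : ℤ) (L : ℤ)).filter fun v =>
        ∃ y z : ℤ × ℤ,
          (x.1 - s / 2 ≤ (y.1 : ℝ) ∧ (y.1 : ℝ) ≤ x.1 + s / 2 ∧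
            x.2 - s / 2 ≤ (y.2 : ℝ) ∧ (y.2 : ℝ) ≤ x.2 + s / 2) ∧
          (x.1 - s / 2 ≤ (z.1 : ℝ) ∧ (z.1 : ℝ) ≤ x.1 + s / 2 ∧
            x.2 - s / 2 ≤ (z.2 : ℝ) ∧ (z.2 : ℝ) ≤ x.2 + s / 2) ∧
          cell L v y ≠ cell L v z).card : ℝ) /
      ((Finset.Ico (0 : ℤ) (L : ℤ) ×ˢ Finset.Ico (0 : ℤ) (L : ℤ)).card : ℝ) ≤
      2 * s / L := by
  set S₁ : Set ℤ := Int.cast ⁻¹' Set.Icc (x.1 - s / 2) (x.1 + s / 2)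
  set S₂ : Set ℤ := Int.cast ⁻¹' Set.Icc (x.2 - s / 2) (x.2 + s / 2)
  have h₁ : (#(splitShifts L S₁) : ℝ) ≤ s := by
    linarith [card_splitShifts_le L (lo := x.1 - s / 2) (hi := x.1 + s / 2) (by linarith)]
  have h₂ : (#(splitShifts L S₂) : ℝ) ≤ s := by
    linarith [card_splitShifts_le L (lo := x.2 - s / 2) (hi := x.2 + s / 2) (by linarith)]
  rw [card_product, Int.card_Ico, sub_zero, Int.toNat_natCast, Nat.cast_mul]
  calc _ ≤ ((#(splitShifts L S₁) * L + L * #(splitShifts L S₂) : ℕ) : ℝ) / (L * L) := by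
        gcongr
        exact Nat.cast_le.mpr (card_filter_cell_ne_le L _
          fun y hy => ⟨⟨hy.1, hy.2.1⟩, hy.2.2.1, hy.2.2.2⟩)
    _ ≤ (s * L + L * s) / (L * L) := by
        push_cast
        gcongr
    _ = 2 * s / L := by
        rcases eq_or_ne (L : ℝ) 0 with hL | hL
        · simp [hL]
        · field_simp
          ring

open scoped Classical in
/-- for a square Q of side s centered at x ∈ ℝ² and v uniform on
{0,…,L−1}², the probability that two lattice points of Q fall in different
cells of the grid (L,v) is at most 2s/L. -/
theorem square_split_probability (L : ℕ) (hL : 1 ≤ L) (s : ℝ) (hs : 0 < s) (x : ℝ × ℝ) :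
    (((Finset.Ico (0 : ℤ) (L : ℤ) ×ˢ Finset.Ico (0 : ℤ) (L : ℤ)).filter fun v =>
        ∃ y z : ℤ × ℤ,
          (x.1 - s / 2 ≤ (y.1 : ℝ) ∧ (y.1 : ℝ) ≤ x.1 + s / 2 ∧
            x.2 - s / 2 ≤ (y.2 : ℝ) ∧ (y.2 : ℝ) ≤ x.2 + s / 2) ∧
          (x.1 - s / 2 ≤ (z.1 : ℝ) ∧ (z.1 : ℝ) ≤ x.1 + s / 2 ∧
            x.2 - s / 2 ≤ (z.2 : ℝ) ∧ (z.2 : ℝ) ≤ x.2 + s / 2) ∧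
          cell L v y ≠ cell L v z).card : ℝ) /
      ((Finset.Ico (0 : ℤ) (L : ℤ) ×ˢ Finset.Ico (0 : ℤ) (L : ℤ)).card : ℝ) ≤
      2 * s / L :=
  square_split_probability_general L s hs x
end

section
/- Let n, k ≥ 1, let L ≥ 1 be an integer, let a, b : {1,…,n} → ℤ² be sequences of points such that the multiset T has at most k distinct points, and let σ be any permutation of {1,…,n}. If v is chosen uniformly at random from {0,…,L−1}², then the probability that there exists i with ‖a(i) − b(σ(i))‖₁ < L/(8k) and cell_{L,v}(a(i)) ≠ cell_{L,v}(b(σ(i))) is at most 1/2. -/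
open Finset

namespace Int

theorem ediv_eq_of_mem_Icc {L lo hi x : ℤ} (hL : 0 < L) (h : lo / L = hi / L)
    (hx : x ∈ Set.Icc lo hi) : x / L = lo / L :=
  le_antisymm (h ▸ Int.ediv_le_ediv hL hx.2) (Int.ediv_le_ediv hL hx.1)

theorem emod_lt_sub_of_ediv_ne {L x y : ℤ} (hL : 0 < L) (hxy : x ≤ y) (h : x / L ≠ y / L) :
    y % L < y - x := by
  by_contra! hle
  refine h (le_antisymm (Int.ediv_le_ediv hL hxy) (Int.le_ediv_of_mul_le hL ?_))
  linarith [emod_def y L, mul_comm L (y / L)]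

end Int

/-- The shifts `w ∈ [0, L)` for which the one-dimensional grid `w + Lℤ` separates `lo` and `hi`. -/
noncomputable def separatingShifts (L lo hi : ℤ) : Finset ℤ :=
  (Ico 0 L).filter fun w => (lo - w) / L ≠ (hi - w) / L

/-- A separating shift `w` puts `hi - w` within `hi - lo` above a multiple of `L`, and
`w ↦ (hi - w) % L` is injective on `[0, L)`. -/
theorem card_separatingShifts_le {L lo hi : ℤ} (hL : 0 < L) (h : lo ≤ hi) :
    (#(separatingShifts L lo hi) : ℤ) ≤ hi - lo := by
  have hcard : #(separatingShifts L lo hi) ≤ #(Ico 0 (hi - lo)) := by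
    refine card_le_card_of_injOn (fun w => (hi - w) % L) ?_ ?_
    · intro w hw
      simp only [separatingShifts, coe_filter, Set.mem_ofPred_eq] at hw
      have := Int.emod_lt_sub_of_ediv_ne hL (by linarith) hw.2
      simp only [coe_Ico, Set.mem_Ico]
      exact ⟨Int.emod_nonneg _ hL.ne', by linarith⟩
    · intro w₁ hw₁ w₂ hw₂ heq
      simp only [separatingShifts, coe_filter, mem_Ico, Set.mem_ofPred_eq] at hw₁ hw₂
      have hdvd : L ∣ w₁ - w₂ := by simpa using (Int.ModEq.dvd heq)
      have := Int.eq_zero_of_abs_lt_dvd hdvd (abs_sub_lt_iff.mpr ⟨by linarith, by linarith⟩)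
      linarith
  rw [Int.card_Ico, sub_zero] at hcard
  omega

theorem cell_ne_iff {L : ℕ} {v p q : ℤ × ℤ} :
    cell L v p ≠ cell L v q ↔
      (p.1 - v.1) / L ≠ (q.1 - v.1) / L ∨ (p.2 - v.2) / L ≠ (q.2 - v.2) / L := by
  simp only [cell, ne_eq, Prod.mk.injEq, not_and_or]

theorem cell_eq_of_mem_Icc {L : ℕ} (hL : 0 < L) {v lo hi p : ℤ × ℤ}
    (h : cell L v lo = cell L v hi) (hp : p ∈ Set.Icc lo hi) : cell L v p = cell L v lo := by
  have hL' : (0 : ℤ) < L := by exact_mod_cast hL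
  simp only [cell, Prod.mk.injEq] at h ⊢
  exact ⟨Int.ediv_eq_of_mem_Icc hL' h.1 ⟨by linarith [hp.1.1], by linarith [hp.2.1]⟩,
    Int.ediv_eq_of_mem_Icc hL' h.2 ⟨by linarith [hp.1.2], by linarith [hp.2.2]⟩⟩

theorem mem_Icc_of_l1_sub_le {p q : ℤ × ℤ} {D : ℤ} (h : l1 (p - q) ≤ D) :
    p ∈ Set.Icc (q - (D, D)) (q + (D, D)) := by
  simp only [l1, Prod.fst_sub, Prod.snd_sub] at h
  have h₁ := abs_le.mp ((le_add_of_nonneg_right (abs_nonneg _)).trans h)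
  have h₂ := abs_le.mp ((le_add_of_nonneg_left (abs_nonneg _)).trans h)
  exact ⟨⟨by simp only [Prod.fst_sub]; linarith, by simp only [Prod.snd_sub]; linarith⟩,
    ⟨by simp only [Prod.fst_add]; linarith, by simp only [Prod.snd_add]; linarith⟩⟩

/-- Cells are monotone in each coordinate, so if the corners of the box `q ± (D, D)` share a
cell, so does every point of the box, which contains the `ℓ₁`-ball of radius `D` around `q`. -/
theorem cell_ne_corners_of_cell_ne {L : ℕ} (hL : 0 < L) {v p q : ℤ × ℤ} {D : ℤ}
    (hpq : l1 (p - q) ≤ D) (h : cell L v p ≠ cell L v q) :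
    cell L v (q - (D, D)) ≠ cell L v (q + (D, D)) := by
  intro hcorners
  have hD : 0 ≤ D := (add_nonneg (abs_nonneg _) (abs_nonneg _)).trans hpq
  have hq : q ∈ Set.Icc (q - (D, D)) (q + (D, D)) :=
    mem_Icc_of_l1_sub_le (by simpa [l1] using hD)
  exact h ((cell_eq_of_mem_Icc hL hcorners (mem_Icc_of_l1_sub_le hpq)).trans
    (cell_eq_of_mem_Icc hL hcorners hq).symm)

theorem card_filter_cell_ne_le_s15 {L : ℕ} (hL : 0 < L) {lo hi : ℤ × ℤ} (h : lo ≤ hi) :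
    (#((Ico (0 : ℤ) L ×ˢ Ico (0 : ℤ) L).filter fun v => cell L v lo ≠ cell L v hi) : ℤ) ≤
      (hi.1 - lo.1 + (hi.2 - lo.2)) * L := by
  have hL' : (0 : ℤ) < L := by exact_mod_cast hL
  have hsub : ((Ico (0 : ℤ) L ×ˢ Ico (0 : ℤ) L).filter fun v => cell L v lo ≠ cell L v hi) ⊆
      separatingShifts L lo.1 hi.1 ×ˢ Ico (0 : ℤ) L ∪
        Ico (0 : ℤ) L ×ˢ separatingShifts L lo.2 hi.2 := by
    intro v hv
    simp only [mem_filter, mem_product, cell_ne_iff] at hv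
    simp only [mem_union, mem_product, separatingShifts, mem_filter]
    tauto
  have h₁ := card_separatingShifts_le hL' h.1
  have h₂ := card_separatingShifts_le hL' h.2
  calc _ ≤ (#(separatingShifts L lo.1 hi.1 ×ˢ Ico (0 : ℤ) L) : ℤ) +
          #(Ico (0 : ℤ) L ×ˢ separatingShifts L lo.2 hi.2) := by
        exact_mod_cast (card_le_card hsub).trans (card_union_le _ _)
    _ = #(separatingShifts L lo.1 hi.1) * L + L * #(separatingShifts L lo.2 hi.2) := by
        simp [card_product]
    _ ≤ (hi.1 - lo.1) * L + L * (hi.2 - lo.2) := by gcongr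
    _ = (hi.1 - lo.1 + (hi.2 - lo.2)) * L := by ring

theorem card_le_of_forall_exists_close_pair_cell_ne {ι : Type*} [Fintype ι] {L : ℕ}
    (hL : 0 < L) (p q : ι → ℤ × ℤ) {D : ℤ} (hD : 0 ≤ D) (S : Finset (ℤ × ℤ))
    (hS : S ⊆ Ico (0 : ℤ) L ×ˢ Ico (0 : ℤ) L)
    (hsplit : ∀ v ∈ S, ∃ i, l1 (p i - q i) ≤ D ∧ cell L v (p i) ≠ cell L v (q i)) :
    (#S : ℝ) ≤ #(univ.image q) * (4 * D * L) := by
  set separating := fun c : ℤ × ℤ =>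
    (Ico (0 : ℤ) L ×ˢ Ico (0 : ℤ) L).filter fun v => cell L v (c - (D, D)) ≠ cell L v (c + (D, D))
  have hcover : S ⊆ (univ.image q).biUnion separating := by
    intro v hv
    obtain ⟨i, hpq, hne⟩ := hsplit v hv
    exact mem_biUnion.mpr ⟨q i, mem_image_of_mem _ (mem_univ _),
      mem_filter.mpr ⟨hS hv, cell_ne_corners_of_cell_ne hL hpq hne⟩⟩
  have hDD : (0 : ℤ × ℤ) ≤ (D, D) := ⟨hD, hD⟩
  have hseparating (c : ℤ × ℤ) : (#(separating c) : ℝ) ≤ 4 * D * L := by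
    have := card_filter_cell_ne_le_s15 hL ((sub_le_self c hDD).trans (le_add_of_nonneg_right hDD))
    simp only [Prod.fst_add, Prod.fst_sub, Prod.snd_add, Prod.snd_sub] at this
    exact_mod_cast this.trans_eq (by ring)
  calc _ ≤ (#((univ.image q).biUnion separating) : ℝ) := by exact_mod_cast card_le_card hcover
    _ ≤ ∑ c ∈ univ.image q, (#(separating c) : ℝ) := by exact_mod_cast card_biUnion_le
    _ ≤ #(univ.image q) * (4 * D * L) := by
      rw [← nsmul_eq_mul, ← sum_const]
      exact sum_le_sum fun c _ => hseparating c

open scoped Classical in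
theorem good_grid_probability_general (n k : ℕ) (hk : 1 ≤ k)
    (L : ℕ) (hL : 1 ≤ L) (a b : Fin n → ℤ × ℤ)
    (hT : (Finset.univ.image b).card ≤ k) (σ : Equiv.Perm (Fin n)) :
    (((Finset.Ico (0 : ℤ) (L : ℤ) ×ˢ Finset.Ico (0 : ℤ) (L : ℤ)).filter fun v =>
        ∃ i, (l1 (a i - b (σ i)) : ℝ) < (L : ℝ) / (8 * k) ∧
          cell L v (a i) ≠ cell L v (b (σ i))).card : ℝ) /
      ((Finset.Ico (0 : ℤ) (L : ℤ) ×ˢ Finset.Ico (0 : ℤ) (L : ℤ)).card : ℝ) ≤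
      1 / 2 := by
  set D : ℤ := ⌊(L : ℝ) / (8 * k)⌋
  have h8kD : 8 * k * (D : ℝ) ≤ L := by
    have := Int.floor_le ((L : ℝ) / (8 * k))
    rwa [le_div_iff₀ (by positivity), mul_comm] at this
  have hD : 0 ≤ D := Int.floor_nonneg.mpr (by positivity)
  have hgrid : (#(Ico (0 : ℤ) L ×ˢ Ico (0 : ℤ) L) : ℝ) = L * L := by simp
  rw [hgrid, div_le_iff₀ (by positivity)]
  calc _ ≤ (#(univ.image (b ∘ σ)) : ℝ) * (4 * D * L) :=
        card_le_of_forall_exists_close_pair_cell_ne hL a (b ∘ σ) hD _ (filter_subset _ _)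
          fun v hv => by
            obtain ⟨i, hclose, hne⟩ := (mem_filter.mp hv).2
            exact ⟨i, Int.le_floor.mpr hclose.le, hne⟩
    _ = #(univ.image b) * (4 * D * L) := by rw [image_comp, image_univ_equiv]
    _ ≤ k * (4 * D * L) := by gcongr
    _ ≤ 1 / 2 * (L * L) := by
        linarith [mul_le_mul_of_nonneg_right h8kD (L.cast_nonneg : (0 : ℝ) ≤ L)]

open scoped Classical in
/-- if T has at most k distinct points, then for v uniform on
{0,…,L−1}², the probability that some matched pair at ℓ1 distance < L/(8k) is
split by the grid (L,v) is at most 1/2. -/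
theorem good_grid_probability (n k : ℕ) (hn : 1 ≤ n) (hk : 1 ≤ k)
    (L : ℕ) (hL : 1 ≤ L) (a b : Fin n → ℤ × ℤ)
    (hT : (Finset.univ.image b).card ≤ k) (σ : Equiv.Perm (Fin n)) :
    (((Finset.Ico (0 : ℤ) (L : ℤ) ×ˢ Finset.Ico (0 : ℤ) (L : ℤ)).filter fun v =>
        ∃ i, (l1 (a i - b (σ i)) : ℝ) < (L : ℝ) / (8 * k) ∧
          cell L v (a i) ≠ cell L v (b (σ i))).card : ℝ) /
      ((Finset.Ico (0 : ℤ) (L : ℤ) ×ˢ Finset.Ico (0 : ℤ) (L : ℤ)).card : ℝ) ≤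
      1 / 2 :=
  good_grid_probability_general n k hk L hL a b hT σ
end

section
/- Let d ≥ 1, Δ = 2^d, n, k ≥ 1, let a, b : {1,…,n} → {1,…,Δ}² be sequences of points such that the multiset T has at most k distinct points, and let σ be an optimal matching. For each i ∈ {0,…,d} and j ∈ {1,…,2d}, let v_i^j be chosen independently and uniformly at random from {0,…,2^i−1}². Call the grid (2^i, v_i^j) good if there is no index m with ‖a(m) − b(σ(m))‖₁ < 2^{i−3}/k and cell_{2^i, v_i^j}(a(m)) ≠ cell_{2^i, v_i^j}(b(σ(m))). Then the probability that for every i ∈ {0,…,d} at least one j ∈ {1,…,2d} gives a good grid (2^i, v_i^j) is at least 1 − (d+1)/2^{2d}. -/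
/-- The sample space for choosing, independently and uniformly, a shift
w (i, j) ∈ {0,…,2^i−1}² for every level i ∈ {0,…,d} and every j ∈ {1,…,2d}
(here the uniform distribution on this product set is the product of the
per-coordinate uniform distributions). -/
noncomputable def shiftSpace (d : ℕ) : Finset ((Fin (d + 1) × Fin (2 * d)) → ℤ × ℤ) :=
  Fintype.piFinset fun p =>
    Finset.Ico (0 : ℤ) (2 ^ (p.1 : ℕ) : ℤ) ×ˢ Finset.Ico (0 : ℤ) (2 ^ (p.1 : ℕ) : ℤ)

/-!
Fix a level with cell size `L` and put `s = ⌊(L - 1) / 8k⌋`, so that every matched pair shorter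
than `L / 8k` has ℓ1 length at most `s` and `8ks ≤ L`. Such a pair can only be separated by the
grid with shift `v` if a coordinate of its endpoint `t = b (σ m)` lies within `s` of a cell wall;
this condition depends on `t` alone and excludes at most `4sL` of the `L²` shifts. As `t` takes at
most `k` values, at most half of the shifts of a level are bad. The `2d` shifts of a level are
independent, so they are all bad with probability at most `2^{-2d}`, and a union bound over the
`d + 1` levels concludes.
-/

open Finset

-- `(t - u) % L` is the offset of `t` in its cell of the grid `u + Lℤ`.
noncomputable def nearBoundary (L s : ℕ) (t : ℤ) : Finset ℤ :=
  (Ico 0 (L : ℤ)).filter fun u => (t - u) % L < s ∨ L - s ≤ (t - u) % L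

lemma mem_nearBoundary_of_ediv_ne {L s : ℕ} {x t u : ℤ} (hL : 0 < L) (hu : u ∈ Ico 0 (L : ℤ))
    (hxt : |x - t| ≤ s) (hne : (x - u) / L ≠ (t - u) / L) : u ∈ nearBoundary L s t := by
  refine mem_filter.mpr ⟨hu, ?_⟩
  by_contra! hfar
  apply hne
  have hL' : (0 : ℤ) < L := by exact_mod_cast hL
  have hsplit : x - u = ((t - u) % L + (x - t)) + (t - u) / L * L := by
    linear_combination -Int.mul_ediv_add_emod (t - u) L
  have ⟨hlo, hhi⟩ := abs_le.mp hxt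
  rw [hsplit, Int.add_mul_ediv_right _ _ hL'.ne',
    Int.ediv_eq_zero_of_lt (by linarith) (by linarith), zero_add]

lemma card_nearBoundary_le (L s : ℕ) (t : ℤ) (hL : 0 < L) : #(nearBoundary L s t) ≤ 2 * s := by
  have hL' : (0 : ℤ) < L := by exact_mod_cast hL
  calc #(nearBoundary L s t)
      ≤ #(Ico 0 (s : ℤ) ∪ Ico (L - s : ℤ) L) := by
        refine card_le_card_of_injOn (fun u => (t - u) % L) ?_ ?_
        · intro u hu
          simp only [nearBoundary, coe_filter, Set.mem_ofPred_eq] at hu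
          rcases hu.2 with h | h
          · exact mem_union_left _ (mem_Ico.mpr ⟨Int.emod_nonneg _ hL'.ne', h⟩)
          · exact mem_union_right _ (mem_Ico.mpr ⟨h, Int.emod_lt_of_pos _ hL'⟩)
        · intro u₁ hu₁ u₂ hu₂ heq
          simp only [nearBoundary, coe_filter, mem_Ico, Set.mem_ofPred_eq] at hu₁ hu₂
          have hmod : u₁ ≡ u₂ [ZMOD L] := by
            simpa using (Int.ModEq.sub_left t (heq : t - u₁ ≡ t - u₂ [ZMOD L]))
          rwa [Int.ModEq, Int.emod_eq_of_lt hu₁.1.1 hu₁.1.2,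
            Int.emod_eq_of_lt hu₂.1.1 hu₂.1.2] at hmod
    _ ≤ #(Ico 0 (s : ℤ)) + #(Ico (L - s : ℤ) L) := card_union_le _ _
    _ = 2 * s := by simp only [Int.card_Ico]; omega

noncomputable def nearBoundary₂ (L s : ℕ) (t : ℤ × ℤ) : Finset (ℤ × ℤ) :=
  nearBoundary L s t.1 ×ˢ Ico 0 (L : ℤ) ∪ Ico 0 (L : ℤ) ×ˢ nearBoundary L s t.2

lemma mem_nearBoundary₂_of_cell_ne {L s : ℕ} {p t v : ℤ × ℤ} (hL : 0 < L)
    (hv : v ∈ Ico 0 (L : ℤ) ×ˢ Ico 0 (L : ℤ)) (hpt : l1 (p - t) ≤ s)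
    (hne : cell L v p ≠ cell L v t) : v ∈ nearBoundary₂ L s t := by
  obtain ⟨hv₁, hv₂⟩ := mem_product.mp hv
  have h₁ : |p.1 - t.1| ≤ s := by
    have := abs_nonneg (p.2 - t.2); simp only [l1, Prod.fst_sub, Prod.snd_sub] at hpt; linarith
  have h₂ : |p.2 - t.2| ≤ s := by
    have := abs_nonneg (p.1 - t.1); simp only [l1, Prod.fst_sub, Prod.snd_sub] at hpt; linarith
  by_cases hne₁ : (p.1 - v.1) / L = (t.1 - v.1) / L
  · have hne₂ : (p.2 - v.2) / L ≠ (t.2 - v.2) / L := fun h => hne (Prod.ext hne₁ h)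
    exact mem_union_right _ (mem_product.mpr ⟨hv₁, mem_nearBoundary_of_ediv_ne hL hv₂ h₂ hne₂⟩)
  · exact mem_union_left _ (mem_product.mpr ⟨mem_nearBoundary_of_ediv_ne hL hv₁ h₁ hne₁, hv₂⟩)

lemma card_nearBoundary₂_le (L s : ℕ) (t : ℤ × ℤ) (hL : 0 < L) :
    #(nearBoundary₂ L s t) ≤ 4 * s * L := by
  have hIco : #(Ico 0 (L : ℤ)) = L := by simp
  calc #(nearBoundary₂ L s t)
      ≤ #(nearBoundary L s t.1) * L + L * #(nearBoundary L s t.2) := by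
        simpa only [nearBoundary₂, card_product, hIco] using
          card_union_le (nearBoundary L s t.1 ×ˢ Ico 0 (L : ℤ))
            (Ico 0 (L : ℤ) ×ˢ nearBoundary L s t.2)
    _ ≤ 2 * s * L + L * (2 * s) := by
        gcongr <;> exact card_nearBoundary_le _ _ _ hL
    _ = 4 * s * L := by ring

lemma card_filter_cell_ne_le_s16 {ι : Type*} (L s : ℕ) (hL : 0 < L) (T : Finset (ℤ × ℤ))
    (p q : ι → ℤ × ℤ) (hq : ∀ m, q m ∈ T)
    [DecidablePred fun v : ℤ × ℤ => ∃ m, l1 (p m - q m) ≤ s ∧ cell L v (p m) ≠ cell L v (q m)] :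
    #((Ico 0 (L : ℤ) ×ˢ Ico 0 (L : ℤ)).filter fun v =>
      ∃ m, l1 (p m - q m) ≤ s ∧ cell L v (p m) ≠ cell L v (q m)) ≤ #T * (4 * s * L) := by
  classical
  calc _ ≤ #(T.biUnion (nearBoundary₂ L s)) := by
        refine card_le_card fun v hv => ?_
        obtain ⟨hv, m, hpq, hne⟩ := mem_filter.mp hv
        exact mem_biUnion.mpr ⟨q m, hq m, mem_nearBoundary₂_of_cell_ne hL hv hpq hne⟩
    _ ≤ #T * (4 * s * L) :=
        card_biUnion_le_card_mul _ _ _ fun t _ => card_nearBoundary₂_le L s t hL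

lemma le_div_of_cast_lt_div {x : ℤ} (hx : 0 ≤ x) {L k : ℕ} (h : (x : ℝ) < L / (8 * k)) :
    x ≤ ((L - 1) / (8 * k) : ℕ) := by
  lift x to ℕ using hx
  rcases Nat.eq_zero_or_pos k with rfl | hk
  · simp only [CharP.cast_eq_zero, mul_zero, div_zero] at h
    exact absurd h (not_lt.mpr (Nat.cast_nonneg x))
  have hxL : x * (8 * k) < L := by
    exact_mod_cast (lt_div_iff₀ (by positivity)).mp h
  exact_mod_cast (Nat.le_div_iff_mul_le (by positivity)).mpr (by omega)

lemma two_mul_card_filter_cell_ne_le {ι : Type*} (L k : ℕ) (hL : 0 < L) (r : ℝ)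
    (hr : r ≤ L / (8 * k)) (T : Finset (ℤ × ℤ)) (hT : #T ≤ k) (p q : ι → ℤ × ℤ)
    (hq : ∀ m, q m ∈ T)
    [DecidablePred fun v : ℤ × ℤ =>
      ∃ m, (l1 (p m - q m) : ℝ) < r ∧ cell L v (p m) ≠ cell L v (q m)] :
    2 * #((Ico 0 (L : ℤ) ×ˢ Ico 0 (L : ℤ)).filter fun v =>
      ∃ m, (l1 (p m - q m) : ℝ) < r ∧ cell L v (p m) ≠ cell L v (q m)) ≤
      #(Ico 0 (L : ℤ) ×ˢ Ico 0 (L : ℤ)) := by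
  classical
  set s := (L - 1) / (8 * k)
  have hks : 8 * k * s ≤ L := (Nat.mul_div_le (L - 1) (8 * k)).trans (Nat.sub_le L 1)
  have hsub : ∀ v ∈ Ico 0 (L : ℤ) ×ˢ Ico 0 (L : ℤ),
      (∃ m, (l1 (p m - q m) : ℝ) < r ∧ cell L v (p m) ≠ cell L v (q m)) →
      ∃ m, l1 (p m - q m) ≤ s ∧ cell L v (p m) ≠ cell L v (q m) := by
    rintro v - ⟨m, hm, hne⟩
    exact ⟨m, le_div_of_cast_lt_div (by unfold l1; positivity) (hm.trans_le hr), hne⟩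
  calc _ ≤ 2 * (#T * (4 * s * L)) := by
        gcongr
        exact (card_le_card (monotone_filter_right _ hsub)).trans
          (card_filter_cell_ne_le_s16 L s hL T p q hq)
    _ ≤ 2 * (k * (4 * s * L)) := by gcongr
    _ = 8 * k * s * L := by ring
    _ ≤ L * L := by gcongr
    _ = _ := by simp

lemma filter_forall_mem_piFinset {ι α : Type*} [Fintype ι] [DecidableEq ι] (S : ι → Finset α)
    (J : Finset ι) (P : ι → α → Prop) [∀ i, DecidablePred (P i)]
    [DecidablePred fun w : ι → α => ∀ i ∈ J, P i (w i)] :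
    (Fintype.piFinset S).filter (fun w : ι → α => ∀ i ∈ J, P i (w i)) =
      Fintype.piFinset fun i => if i ∈ J then (S i).filter (P i) else S i := by
  ext w
  simp only [mem_filter, Fintype.mem_piFinset]
  constructor
  · rintro ⟨hS, hP⟩ i
    split_ifs with hi
    · exact mem_filter.mpr ⟨hS i, hP i hi⟩
    · exact hS i
  · intro h
    have hJ : ∀ i ∈ J, w i ∈ S i ∧ P i (w i) := fun i hi => by
      simpa only [if_pos hi, mem_filter] using h i
    refine ⟨fun i => ?_, fun i hi => (hJ i hi).2⟩
    by_cases hi : i ∈ J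
    · exact (hJ i hi).1
    · simpa only [if_neg hi] using h i

lemma card_filter_forall_mem_piFinset_mul_pow_le {ι α : Type*} [Fintype ι] [DecidableEq ι]
    (S : ι → Finset α) (J : Finset ι) (P : ι → α → Prop) [∀ i, DecidablePred (P i)]
    [DecidablePred fun w : ι → α => ∀ i ∈ J, P i (w i)] (c : ℕ)
    (hP : ∀ i ∈ J, c * #((S i).filter (P i)) ≤ #(S i)) :
    #((Fintype.piFinset S).filter fun w : ι → α => ∀ i ∈ J, P i (w i)) * c ^ #J ≤
      #(Fintype.piFinset S) := by
  have hpow : c ^ #J = ∏ i, if i ∈ J then c else 1 := by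
    rw [prod_ite_mem, univ_inter, prod_const]
  rw [filter_forall_mem_piFinset, Fintype.card_piFinset, Fintype.card_piFinset, hpow,
    ← prod_mul_distrib]
  refine prod_le_prod' fun i _ => ?_
  split_ifs with hi
  · rw [mul_comm]; exact hP i hi
  · rw [mul_one]

lemma card_filter_exists_le_sum {ι α : Type*} [Fintype ι] [DecidableEq α] (s : Finset α)
    (Q : ι → α → Prop) [∀ i, DecidablePred (Q i)] [DecidablePred fun x => ∃ i, Q i x] :
    #(s.filter fun x => ∃ i, Q i x) ≤ ∑ i, #(s.filter (Q i)) := by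
  calc _ ≤ #(univ.biUnion fun i => s.filter (Q i)) := by
        refine card_le_card fun x hx => ?_
        obtain ⟨hx, i, hi⟩ := mem_filter.mp hx
        exact mem_biUnion.mpr ⟨i, mem_univ i, mem_filter.mpr ⟨hx, hi⟩⟩
    _ ≤ _ := card_biUnion_le

lemma one_sub_div_le_card_filter_div {α : Type*} (s : Finset α) (hs : s.Nonempty)
    (P : α → Prop) [DecidablePred P] {c N : ℕ} (hN : 0 < N)
    (h : #(s.filter fun x => ¬ P x) * N ≤ c * #s) :
    1 - (c : ℝ) / N ≤ #(s.filter P) / #s := by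
  have hsplit : (#(s.filter P) : ℝ) + #(s.filter fun x => ¬ P x) = #s := by
    exact_mod_cast card_filter_add_card_filter_not P
  have hbad : (#(s.filter fun x => ¬ P x) : ℝ) * N ≤ c * #s := by exact_mod_cast h
  have hsR : (0 : ℝ) < #s := by exact_mod_cast hs.card_pos
  have hNR : (0 : ℝ) < N := by exact_mod_cast hN
  rw [le_div_iff₀ hsR, sub_mul, one_mul, div_mul_eq_mul_div, sub_le_iff_le_add,
    ← sub_le_iff_le_add', le_div_iff₀ hNR]
  have hbad_eq : (#s : ℝ) - #(s.filter P) = #(s.filter fun x => ¬ P x) := by linarith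
  rwa [hbad_eq]

open scoped Classical in
theorem exists_good_grid_probability_general (d n k : ℕ)
    (a b : Fin n → ℤ × ℤ)
    (hT : (Finset.univ.image b).card ≤ k)
    (σ : Equiv.Perm (Fin n)) :
    1 - ((d : ℝ) + 1) / 2 ^ (2 * d) ≤
      (((shiftSpace d).filter fun w =>
          ∀ i : Fin (d + 1), ∃ j : Fin (2 * d),
            ¬ ∃ m, (l1 (a m - b (σ m)) : ℝ) < (2 : ℝ) ^ (i : ℕ) / (8 * k) ∧
              cell (2 ^ (i : ℕ)) (w (i, j)) (a m) ≠
                cell (2 ^ (i : ℕ)) (w (i, j)) (b (σ m))).card : ℝ) /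
        ((shiftSpace d).card : ℝ) := by
  set Bad : Fin (d + 1) → ℤ × ℤ → Prop := fun i v =>
    ∃ m, (l1 (a m - b (σ m)) : ℝ) < (2 : ℝ) ^ (i : ℕ) / (8 * k) ∧
      cell (2 ^ (i : ℕ)) v (a m) ≠ cell (2 ^ (i : ℕ)) v (b (σ m))
  have hshift : shiftSpace d = Fintype.piFinset fun p =>
      Ico 0 ((2 ^ (p.1 : ℕ) : ℕ) : ℤ) ×ˢ Ico 0 ((2 ^ (p.1 : ℕ) : ℕ) : ℤ) := by
    simp only [shiftSpace, Nat.cast_pow, Nat.cast_ofNat]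
  have hlevel (i : Fin (d + 1)) :
      #((shiftSpace d).filter fun w => ∀ j, Bad i (w (i, j))) * 2 ^ (2 * d) ≤
        #(shiftSpace d) := by
    have := card_filter_forall_mem_piFinset_mul_pow_le _ ({i} ×ˢ (univ : Finset (Fin (2 * d))))
      (fun p => Bad p.1) 2
      fun p _ => two_mul_card_filter_cell_ne_le (2 ^ (p.1 : ℕ)) k (by positivity) _
        (by push_cast; rfl) _ hT a (b ∘ σ) fun m => mem_image_of_mem b (mem_univ _)
    simpa [hshift] using this
  have hbad : #((shiftSpace d).filter fun w => ¬ ∀ i, ∃ j, ¬ Bad i (w (i, j))) * 2 ^ (2 * d) ≤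
      (d + 1) * #(shiftSpace d) := by
    calc _ ≤ (∑ i, #((shiftSpace d).filter fun w => ∀ j, Bad i (w (i, j)))) * 2 ^ (2 * d) := by
          gcongr
          simpa only [not_forall, not_exists, not_not] using
            card_filter_exists_le_sum (shiftSpace d) fun i w => ∀ j, Bad i (w (i, j))
      _ ≤ ∑ _i : Fin (d + 1), #(shiftSpace d) := by
          rw [sum_mul]; exact sum_le_sum fun i _ => hlevel i
      _ = (d + 1) * #(shiftSpace d) := by simp
  have hne : (shiftSpace d).Nonempty :=
    Fintype.piFinset_nonempty.mpr fun p => by simp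
  have key := one_sub_div_le_card_filter_div _ hne _ (by positivity) hbad
  push_cast at key
  exact key

open scoped Classical in
/-- with points in {1,…,2^d}², T with at most k distinct points, σ an
optimal matching, and 2d independent uniform shifts per level i ∈ {0,…,d}, the
probability that every level has at least one good grid — one splitting no matched
pair of ℓ1 length < 2^{i−3}/k — is at least 1 − (d+1)/2^{2d}. -/
theorem exists_good_grid_probability (d n k : ℕ) (hd : 1 ≤ d) (hn : 1 ≤ n) (hk : 1 ≤ k)
    (a b : Fin n → ℤ × ℤ)
    (ha : ∀ i, 1 ≤ (a i).1 ∧ (a i).1 ≤ 2 ^ d ∧ 1 ≤ (a i).2 ∧ (a i).2 ≤ 2 ^ d)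
    (hb : ∀ i, 1 ≤ (b i).1 ∧ (b i).1 ≤ 2 ^ d ∧ 1 ≤ (b i).2 ∧ (b i).2 ≤ 2 ^ d)
    (hT : (Finset.univ.image b).card ≤ k)
    (σ : Equiv.Perm (Fin n))
    (hopt : ∀ τ : Equiv.Perm (Fin n),
      ∑ i, l1 (a i - b (σ i)) ≤ ∑ i, l1 (a i - b (τ i))) :
    1 - ((d : ℝ) + 1) / 2 ^ (2 * d) ≤
      (((shiftSpace d).filter fun w =>
          ∀ i : Fin (d + 1), ∃ j : Fin (2 * d),
            ¬ ∃ m, (l1 (a m - b (σ m)) : ℝ) < (2 : ℝ) ^ (i : ℕ) / (8 * k) ∧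
              cell (2 ^ (i : ℕ)) (w (i, j)) (a m) ≠
                cell (2 ^ (i : ℕ)) (w (i, j)) (b (σ m))).card : ℝ) /
        ((shiftSpace d).card : ℝ) :=
  exists_good_grid_probability_general d n k a b hT σ
end

section
/- Let d ≥ 0, Δ = 2^d, n, k ≥ 1, let a, b : {1,…,n} → {1,…,Δ}² be sequences of points, and let σ be an optimal matching. Suppose for each i ∈ {0,…,d} a grid (2^i, v_i) with cell size 2^i and shift v_i ∈ {0,…,2^i−1}² is good, i.e., there is no index m with ‖a(m) − b(σ(m))‖₁ < 2^{i−3}/k and cell_{2^i, v_i}(a(m)) ≠ cell_{2^i, v_i}(b(σ(m))). Then (1/2)·Σ_{i=0}^{d} 2^i·D_{2^i,v_i}(a,b) ≤ 16k·EMD(a,b). -/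
lemma D_le {n : ℕ} (L : ℕ) (v : ℤ × ℤ) (a b : Fin n → ℤ × ℤ) (σ : Equiv.Perm (Fin n)) :
    D L v a b ≤
      2 * ((Finset.univ.filter fun m => cell L v (a m) ≠ cell L v (b (σ m))).card : ℤ) := by
  classical
  set S := ((Finset.univ.image fun i => cell L v (a i)) ∪
         (Finset.univ.image fun i => cell L v (b i))) with hS
  have key : ∀ c ∈ S,
      |((Finset.univ.filter fun i => cell L v (a i) = c).card : ℤ) -
        ((Finset.univ.filter fun i => cell L v (b i) = c).card : ℤ)| ≤
      ∑ m : Fin n, (if cell L v (a m) ≠ cell L v (b (σ m)) then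
        ((if cell L v (a m) = c then (1:ℤ) else 0) +
         (if cell L v (b (σ m)) = c then (1:ℤ) else 0)) else 0) := by
    intro c _
    have hB : ((Finset.univ.filter fun i => cell L v (b i) = c).card : ℤ)
        = ∑ m : Fin n, (if cell L v (b (σ m)) = c then (1:ℤ) else 0) := by
      rw [Finset.card_filter]
      push_cast
      exact (Equiv.sum_comp σ (fun i => if cell L v (b i) = c then (1:ℤ) else 0)).symm
    have hA : ((Finset.univ.filter fun i => cell L v (a i) = c).card : ℤ)
        = ∑ m : Fin n, (if cell L v (a m) = c then (1:ℤ) else 0) := by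
      rw [Finset.card_filter]; push_cast; rfl
    rw [hA, hB, ← Finset.sum_sub_distrib]
    refine (Finset.abs_sum_le_sum_abs _ _).trans (Finset.sum_le_sum ?_)
    intro m _
    by_cases h : cell L v (a m) = cell L v (b (σ m))
    · simp [h]
    · simp only [h, if_pos, ne_eq, not_false_iff, if_true]
      have h1 : (0:ℤ) ≤ (if cell L v (a m) = c then (1:ℤ) else 0) := by positivity
      have h2 : (0:ℤ) ≤ (if cell L v (b (σ m)) = c then (1:ℤ) else 0) := by positivity
      calc |_ - _| ≤ |(if cell L v (a m) = c then (1:ℤ) else 0)| +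
            |(if cell L v (b (σ m)) = c then (1:ℤ) else 0)| := abs_sub _ _
        _ = _ := by rw [abs_of_nonneg h1, abs_of_nonneg h2]
  calc D L v a b ≤ ∑ c ∈ S, ∑ m : Fin n, (if cell L v (a m) ≠ cell L v (b (σ m)) then
        ((if cell L v (a m) = c then (1:ℤ) else 0) +
         (if cell L v (b (σ m)) = c then (1:ℤ) else 0)) else 0) :=
      Finset.sum_le_sum key
    _ = ∑ m : Fin n, ∑ c ∈ S, (if cell L v (a m) ≠ cell L v (b (σ m)) then
        ((if cell L v (a m) = c then (1:ℤ) else 0) +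
         (if cell L v (b (σ m)) = c then (1:ℤ) else 0)) else 0) := Finset.sum_comm
    _ ≤ ∑ m : Fin n, (if cell L v (a m) ≠ cell L v (b (σ m)) then (2:ℤ) else 0) := by
      apply Finset.sum_le_sum
      intro m _
      by_cases h : cell L v (a m) = cell L v (b (σ m))
      · simp [h]
      · simp only [h, ne_eq, not_false_iff, if_true]
        have hma : cell L v (a m) ∈ S :=
          Finset.mem_union_left _ (Finset.mem_image_of_mem _ (Finset.mem_univ m))
        have hmb : cell L v (b (σ m)) ∈ S :=
          Finset.mem_union_right _ (Finset.mem_image_of_mem _ (Finset.mem_univ (σ m)))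
        rw [Finset.sum_add_distrib, Finset.sum_ite_eq S (cell L v (a m)) (fun _ => (1:ℤ)),
          Finset.sum_ite_eq S (cell L v (b (σ m))) (fun _ => (1:ℤ)), if_pos hma, if_pos hmb]
        norm_num
    _ = 2 * ((Finset.univ.filter fun m => cell L v (a m) ≠ cell L v (b (σ m))).card : ℤ) := by
      rw [← Finset.sum_filter, Finset.sum_const, nsmul_eq_mul, mul_comm]

lemma sum_pow_le_of_le (N : ℕ) (M : ℝ) (hM : 0 ≤ M) (P : ℕ → Prop) [DecidablePred P]
    (h : ∀ i ∈ Finset.range N, P i → (2:ℝ)^i ≤ M) :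
    (∑ i ∈ Finset.range N, if P i then (2:ℝ)^i else 0) ≤ 2 * M := by
  rw [← Finset.sum_filter]
  set F := (Finset.range N).filter P with hF
  rcases F.eq_empty_or_nonempty with he | hne
  · rw [he]; simp; linarith
  · have hjF : F.max' hne ∈ F := F.max'_mem hne
    have hsub : F ⊆ Finset.range (F.max' hne + 1) := by
      intro x hx; rw [Finset.mem_range, Nat.lt_succ_iff]; exact F.le_max' x hx
    have hmax : (2:ℝ)^(F.max' hne) ≤ M := by
      have h1 := Finset.mem_filter.mp hjF
      exact h _ h1.1 h1.2
    calc ∑ i ∈ F, (2:ℝ)^i ≤ ∑ i ∈ Finset.range (F.max' hne + 1), (2:ℝ)^i :=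
        Finset.sum_le_sum_of_subset_of_nonneg hsub (fun i _ _ => by positivity)
      _ = 2^(F.max' hne + 1) - 1 := by
        rw [geom_sum_eq (by norm_num : (2:ℝ) ≠ 1)]; norm_num
      _ ≤ 2 * M := by rw [pow_succ]; nlinarith


/-- upper bound given good grids: if σ is an optimal matching and for
every level i ∈ {0,…,d} the grid (2^i, v_i) is good — it splits no matched pair of
ℓ1 length < 2^{i−3}/k — then (1/2)·Σ_{i=0}^{d} 2^i·D_{2^i,v_i}(a,b) ≤ 16k·EMD(a,b). -/
theorem good_grids_upper_bound (d n k : ℕ) (hn : 1 ≤ n) (hk : 1 ≤ k)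
    (a b : Fin n → ℤ × ℤ)
    (ha : ∀ i, 1 ≤ (a i).1 ∧ (a i).1 ≤ 2 ^ d ∧ 1 ≤ (a i).2 ∧ (a i).2 ≤ 2 ^ d)
    (hb : ∀ i, 1 ≤ (b i).1 ∧ (b i).1 ≤ 2 ^ d ∧ 1 ≤ (b i).2 ∧ (b i).2 ≤ 2 ^ d)
    (σ : Equiv.Perm (Fin n))
    (hopt : ∀ τ : Equiv.Perm (Fin n),
      ∑ i, l1 (a i - b (σ i)) ≤ ∑ i, l1 (a i - b (τ i)))
    (v : ℕ → ℤ × ℤ)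
    (hv : ∀ i ≤ d, 0 ≤ (v i).1 ∧ (v i).1 < 2 ^ i ∧ 0 ≤ (v i).2 ∧ (v i).2 < 2 ^ i)
    (hgood : ∀ i ≤ d, ¬ ∃ m, (l1 (a m - b (σ m)) : ℝ) < (2 : ℝ) ^ i / (8 * k) ∧
      cell (2 ^ i) (v i) (a m) ≠ cell (2 ^ i) (v i) (b (σ m))) :
    (1 / 2 : ℝ) * ∑ i ∈ Finset.range (d + 1), (2 : ℝ) ^ i * (D (2 ^ i) (v i) a b : ℝ) ≤
      16 * (k : ℝ) * (EMD a b : ℝ) := by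
  classical
  have hEMD : EMD a b = ∑ i, l1 (a i - b (σ i)) :=
    le_antisymm (Finset.inf'_le _ (Finset.mem_univ σ))
      (Finset.le_inf' _ _ fun τ _ => hopt τ)
  rw [hEMD]
  have hDle : ∀ i, ((D (2^i) (v i) a b : ℝ)) ≤
      2 * ((Finset.univ.filter fun m =>
        cell (2^i) (v i) (a m) ≠ cell (2^i) (v i) (b (σ m))).card : ℝ) := by
    intro i
    exact_mod_cast D_le (2^i) (v i) a b σ
  have step1 : (1/2 : ℝ) * ∑ i ∈ Finset.range (d+1), (2:ℝ)^i * (D (2^i) (v i) a b : ℝ)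
      ≤ ∑ i ∈ Finset.range (d+1), (2:ℝ)^i * ((Finset.univ.filter fun m =>
        cell (2^i) (v i) (a m) ≠ cell (2^i) (v i) (b (σ m))).card : ℝ) := by
    rw [Finset.mul_sum]
    apply Finset.sum_le_sum; intro i _
    have h2 : (0:ℝ) < 2^i := by positivity
    nlinarith [hDle i]
  refine step1.trans ?_
  have step2 : ∑ i ∈ Finset.range (d+1), (2:ℝ)^i * ((Finset.univ.filter fun m =>
        cell (2^i) (v i) (a m) ≠ cell (2^i) (v i) (b (σ m))).card : ℝ)
      = ∑ m : Fin n, ∑ i ∈ Finset.range (d+1),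
        (if cell (2^i) (v i) (a m) ≠ cell (2^i) (v i) (b (σ m)) then (2:ℝ)^i else 0) := by
    rw [Finset.sum_comm]
    apply Finset.sum_congr rfl; intro i _
    rw [Finset.card_filter]
    push_cast
    rw [Finset.mul_sum]
    apply Finset.sum_congr rfl; intro m _
    by_cases h : cell (2^i) (v i) (a m) = cell (2^i) (v i) (b (σ m)) <;> simp [h]
  rw [step2]
  have hperm : ∀ m : Fin n, ∑ i ∈ Finset.range (d+1),
      (if cell (2^i) (v i) (a m) ≠ cell (2^i) (v i) (b (σ m)) then (2:ℝ)^i else 0)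
      ≤ 16 * (k:ℝ) * (l1 (a m - b (σ m)) : ℝ) := by
    intro m
    have hl1 : (0:ℝ) ≤ (l1 (a m - b (σ m)) : ℝ) := by exact_mod_cast l1_nonneg _
    have hk0 : (0:ℝ) < 8 * k := by positivity
    have hM : (0:ℝ) ≤ 8 * (k:ℝ) * (l1 (a m - b (σ m)) : ℝ) := by positivity
    have hbd := sum_pow_le_of_le (d+1) (8 * (k:ℝ) * (l1 (a m - b (σ m)) : ℝ)) hM
      (fun i => cell (2^i) (v i) (a m) ≠ cell (2^i) (v i) (b (σ m))) ?_
    · linarith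
    · intro i hi hfi
      have hid : i ≤ d := Nat.lt_succ_iff.mp (Finset.mem_range.mp hi)
      have hg := hgood i hid
      push_neg at hg
      have := hg m
      by_cases hlt : (l1 (a m - b (σ m)) : ℝ) < (2:ℝ)^i / (8 * k)
      · exact absurd (this hlt) (by simpa using hfi)
      · push_neg at hlt
        rw [div_le_iff₀ hk0] at hlt
        nlinarith
  calc ∑ m : Fin n, ∑ i ∈ Finset.range (d+1),
      (if cell (2^i) (v i) (a m) ≠ cell (2^i) (v i) (b (σ m)) then (2:ℝ)^i else 0)
      ≤ ∑ m : Fin n, 16 * (k:ℝ) * (l1 (a m - b (σ m)) : ℝ) := Finset.sum_le_sum fun m _ => hperm m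
    _ = 16 * (k:ℝ) * ((∑ i, l1 (a i - b (σ i)) : ℤ) : ℝ) := by
      rw [← Finset.mul_sum]; push_cast; ring
end
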